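/- arXiv:1912.06407 — 9 statements merged into one kernel-verified Lean document; each statement's English description precedes it below -/
import Mathlib

section
/- Under the stated two-sample OLS setup, the relevance by ghost variable of Z satisfies the exact identities Rel_Gh(Z) := (1/n₂)·‖(X₂β̂_x + z₂β̂_z) − (X₂β̂_x + ẑ₂β̂_z)‖² = β̂_z² · σ̂²_{z.x,n₂}, where σ̂²_{z.x,n₂} := (1/n₂)‖z₂ − ẑ₂‖², and consequently, if σ̂² > 0 and k > 0, (n₁/σ̂²)·Rel_Gh(Z) = F_z · σ̂²_{z.x,n₂}/σ̂²_{z.x,n₁}, where F_z := β̂_z²·k/σ̂² and σ̂²_{z.x,n₁} := k/n₁. -/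
open Matrix

/-- **Relevance by ghost variable (Theorem 1).**
Under the stated two-sample OLS setup, the relevance by ghost variable of `Z` satisfies
the exact identities
`Rel_Gh(Z) := (1/n₂)·‖(X₂β̂_x + z₂β̂_z) − (X₂β̂_x + ẑ₂β̂_z)‖² = β̂_z²·σ̂²_{z.x,n₂}`,
where `σ̂²_{z.x,n₂} := (1/n₂)‖z₂ − ẑ₂‖²`, and consequently, if `σ̂² > 0` and `k > 0`,
`(n₁/σ̂²)·Rel_Gh(Z) = F_z·σ̂²_{z.x,n₂}/σ̂²_{z.x,n₁}`, where `F_z := β̂_z²·k/σ̂²` and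
`σ̂²_{z.x,n₁} := k/n₁`. -/
theorem relevance_by_ghost_variable
    {n₁ n₂ p : ℕ} (hn₁ : 0 < n₁) (hn₂ : 0 < n₂) (hp : 0 < p) (hnp : p + 1 < n₁)
    (X₁ : Matrix (Fin n₁) (Fin p) ℝ) (z₁ y₁ : Fin n₁ → ℝ)
    -- the augmented matrix `W = [X₁ z₁]` (last column is `z₁`)
    (W : Matrix (Fin n₁) (Fin (p + 1)) ℝ)
    (hW : W = Matrix.of fun i j => Fin.lastCases (z₁ i) (fun j' => X₁ i j') j)
    -- the augmented Gram matrix `[X₁ z₁]ᵀ[X₁ z₁]` is invertible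
    (hWunit : IsUnit (Wᵀ * W).det)
    -- hence `X₁ᵀX₁` is invertible
    (hXunit : IsUnit (X₁ᵀ * X₁).det)
    -- stacked joint OLS coefficients `b = ([X₁ z₁]ᵀ[X₁ z₁])⁻¹[X₁ z₁]ᵀy₁`
    (b : Fin (p + 1) → ℝ) (hb : b = (Wᵀ * W)⁻¹ *ᵥ (Wᵀ *ᵥ y₁))
    (βx : Fin p → ℝ) (βz : ℝ)
    (hβx : βx = fun j => b j.castSucc) (hβz : βz = b (Fin.last p))
    -- `α̂₁ = (X₁ᵀX₁)⁻¹X₁ᵀz₁`, `ẑ₁ = X₁α̂₁`, `k = (z₁ − ẑ₁)ᵀ(z₁ − ẑ₁)`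
    (α₁ : Fin p → ℝ) (hα₁ : α₁ = (X₁ᵀ * X₁)⁻¹ *ᵥ (X₁ᵀ *ᵥ z₁))
    (zhat₁ : Fin n₁ → ℝ) (hzhat₁ : zhat₁ = X₁ *ᵥ α₁)
    (k : ℝ) (hk : k = (z₁ - zhat₁) ⬝ᵥ (z₁ - zhat₁))
    -- `σ̂²_{z.x,n₁} := k/n₁`
    (σ2zx₁ : ℝ) (hσ2zx₁ : σ2zx₁ = k / n₁)
    -- training residual variance `σ̂²` (with `n₁ > p + 1`)
    (σ2 : ℝ)
    (hσ2 : σ2 = (y₁ - X₁ *ᵥ βx - βz • z₁) ⬝ᵥ (y₁ - X₁ *ᵥ βx - βz • z₁) / (n₁ - p - 1))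
    -- `F_z := β̂_z²·k/σ̂²`, the F-test statistic for `H₀ : β_z = 0`
    (Fz : ℝ) (hFz : Fz = βz ^ 2 * k / σ2)
    -- test sample, with `X₂ᵀX₂` invertible
    (X₂ : Matrix (Fin n₂) (Fin p) ℝ) (z₂ : Fin n₂ → ℝ)
    (hX₂unit : IsUnit (X₂ᵀ * X₂).det)
    -- ghost variable of `z₂`: OLS fitted values of the regression of `z₂` on `X₂`
    (zhat₂ : Fin n₂ → ℝ) (hzhat₂ : zhat₂ = X₂ *ᵥ ((X₂ᵀ * X₂)⁻¹ *ᵥ (X₂ᵀ *ᵥ z₂)))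
    -- `σ̂²_{z.x,n₂} := (1/n₂)‖z₂ − ẑ₂‖²`
    (σ2zx₂ : ℝ) (hσ2zx₂ : σ2zx₂ = (1 / n₂) * ((z₂ - zhat₂) ⬝ᵥ (z₂ - zhat₂)))
    -- `Rel_Gh(Z) := (1/n₂)·‖(X₂β̂_x + z₂β̂_z) − (X₂β̂_x + ẑ₂β̂_z)‖²`
    (RelGh : ℝ)
    (hRelGh : RelGh = (1 / n₂) *
      (((X₂ *ᵥ βx + βz • z₂) - (X₂ *ᵥ βx + βz • zhat₂)) ⬝ᵥ
        ((X₂ *ᵥ βx + βz • z₂) - (X₂ *ᵥ βx + βz • zhat₂)))) :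
    RelGh = βz ^ 2 * σ2zx₂ ∧
      (0 < σ2 → 0 < k → (n₁ / σ2) * RelGh = Fz * σ2zx₂ / σ2zx₁) := by
  have hdiff : ((X₂ *ᵥ βx + βz • z₂) - (X₂ *ᵥ βx + βz • zhat₂)) = βz • (z₂ - zhat₂) := by
    ext i; simp [smul_sub]; ring
  have h1 : RelGh = βz ^ 2 * σ2zx₂ := by
    rw [hRelGh, hdiff, hσ2zx₂, smul_dotProduct, dotProduct_smul]
    simp only [smul_eq_mul]
    ring
  refine ⟨h1, fun hσ hk => ?_⟩
  rw [h1, hFz, hσ2zx₁]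
  have hn : (n₁ : ℝ) ≠ 0 := Nat.cast_ne_zero.mpr hn₁.ne'
  field_simp
end

section
/- Let X ∈ ℝ^{n×p} have full column rank, with p ≥ 2 and columns x₁, …, x_p. For each j, let r_j = x_j − H_{[j]}x_j be the residual of x_j from its orthogonal projection onto the span of the other p−1 columns. For j ≠ k, let U_{jk} be the span of the p−2 columns other than x_j and x_k, and let a = x_j − P_{U_{jk}}x_j and b = x_k − P_{U_{jk}}x_k (both nonzero by the full-rank assumption); the sample partial correlation of x_j and x_k given the remaining columns is ρ̂_{jk.R} := ⟨a, b⟩/(‖a‖·‖b‖). Then ρ̂_{jk.R} = −⟨r_j, r_k⟩/(‖r_j‖·‖r_k‖); equivalently, writing g_{jk} = (1/n)⟨r_j, r_k⟩, one has ρ̂_{jk.R} = −g_{jk}/√(g_{jj}·g_{kk}). -/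
open Matrix


lemma resid_uniq {E : Type*} [NormedAddCommGroup E] [InnerProductSpace ℝ E]
    (K : Submodule ℝ E) (x u v : E) (hu : x - u ∈ K) (hv : x - v ∈ K)
    (hu' : u ∈ Kᗮ) (hv' : v ∈ Kᗮ) : u = v := by
  have h1 : u - v ∈ K := by
    have := K.sub_mem hv hu
    simpa [sub_sub_sub_cancel_left] using this
  have h2 : u - v ∈ Kᗮ := Kᗮ.sub_mem hu' hv'
  have h3 : u - v ∈ K ⊓ Kᗮ := Submodule.mem_inf.mpr ⟨h1, h2⟩
  have h4 := (Submodule.orthogonal_disjoint K).le_bot h3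
  rw [Submodule.mem_bot] at h4
  exact sub_eq_zero.mp h4

lemma residual_spec {n p : ℕ}
    (X : Matrix (Fin n) (Fin (p + 2)) ℝ)
    (col : Fin (p + 2) → EuclideanSpace ℝ (Fin n)) (hcol : ∀ j i, col j i = X i j)
    (hrank : LinearIndependent ℝ col) (j : Fin (p + 2))
    (rj : EuclideanSpace ℝ (Fin n))
    (hrj : ∀ i, rj i = ((fun i => X i j) -
      (X.submatrix id j.succAbove *
          ((X.submatrix id j.succAbove)ᵀ * X.submatrix id j.succAbove)⁻¹ *
          (X.submatrix id j.succAbove)ᵀ) *ᵥ (fun i => X i j)) i) :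
    col j - rj ∈ Submodule.span ℝ (col '' {l | l ≠ j}) ∧
      rj ∈ (Submodule.span ℝ (col '' {l | l ≠ j}))ᗮ := by
  classical
  set M := X.submatrix id j.succAbove with hM
  set G := Mᵀ * M with hG
  have hsub : LinearIndependent ℝ (col ∘ j.succAbove) :=
    hrank.comp _ (Fin.succAbove_right_injective)
  -- coordinates of M *ᵥ u
  have hMv : ∀ (u : Fin (p + 1) → ℝ) (i : Fin n),
      (M *ᵥ u) i = (∑ m, u m • col (j.succAbove m)) i := by
    intro u i
    have h1 : (∑ m, u m • col (j.succAbove m)) i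
        = ∑ m, u m * col (j.succAbove m) i :=
      map_sum (EuclideanSpace.proj (𝕜 := ℝ) i)
        (fun m => u m • col (j.succAbove m)) Finset.univ
    rw [h1]
    simp only [Matrix.mulVec, dotProduct, hM, Matrix.submatrix_apply, id]
    exact Finset.sum_congr rfl fun m _ => by rw [hcol, mul_comm]
  have hGunit : IsUnit G := by
    rw [← Matrix.mulVec_injective_iff_isUnit]
    have hker : ∀ u, G *ᵥ u = 0 → u = 0 := by
      intro u hu
      have h1 : (M *ᵥ u) ⬝ᵥ (M *ᵥ u) = 0 := by
        have h0 : u ⬝ᵥ (G *ᵥ u) = 0 := by rw [hu]; simp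
        rwa [hG, ← Matrix.mulVec_mulVec, Matrix.dotProduct_mulVec,
          Matrix.vecMul_transpose] at h0
      have h2 : M *ᵥ u = 0 := dotProduct_self_eq_zero.mp h1
      have h3 : ∑ m, u m • col (j.succAbove m) = 0 := by
        ext i
        rw [← hMv u i, h2]; rfl
      exact funext fun m => Fintype.linearIndependent_iff.mp hsub u h3 m
    intro u v huv
    have : G *ᵥ (u - v) = 0 := by
      rw [Matrix.mulVec_sub, huv, sub_self]
    have := hker _ this
    exact sub_eq_zero.mp this
  have hdet : IsUnit G.det := (Matrix.isUnit_iff_isUnit_det G).mp hGunit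
  constructor
  · -- col j - rj ∈ span
    set w := (G⁻¹ * Mᵀ) *ᵥ (fun i => X i j) with hw
    have hBcalc : col j - rj = ∑ m, w m • col (j.succAbove m) := by
      ext i
      have h1 : rj i = X i j - (M *ᵥ w) i := by
        rw [hrj i]
        simp only [Pi.sub_apply]
        rw [hw, Matrix.mulVec_mulVec, ← Matrix.mul_assoc]
      have h2 : (col j - rj) i = col j i - rj i := rfl
      rw [h2, h1, hcol, ← hMv w i]
      ring
    rw [hBcalc]
    exact Submodule.sum_mem _ fun m _ => Submodule.smul_mem _ _
      (Submodule.subset_span ⟨j.succAbove m, Fin.succAbove_ne j m, rfl⟩)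
  · -- rj ∈ spanᗮ
    have hMtr : Mᵀ *ᵥ (fun i => rj i) = 0 := by
      have hfun : (fun i => rj i) = (fun i => X i j)
          - (M * G⁻¹ * Mᵀ) *ᵥ (fun i => X i j) := funext hrj
      rw [hfun, Matrix.mulVec_sub, Matrix.mulVec_mulVec]
      have : Mᵀ * (M * G⁻¹ * Mᵀ) = Mᵀ := by
        rw [← Matrix.mul_assoc, ← Matrix.mul_assoc, ← hG,
          Matrix.mul_nonsing_inv _ hdet, Matrix.one_mul]
      rw [this, sub_self]
    rw [Submodule.mem_orthogonal]
    intro u hu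
    induction hu using Submodule.span_induction with
    | mem x hx =>
        obtain ⟨l, hl, rfl⟩ := hx
        obtain ⟨m, rfl⟩ := Fin.exists_succAbove_eq hl
        have h1 : (inner ℝ (col (j.succAbove m)) rj : ℝ)
            = (Mᵀ *ᵥ (fun i => rj i)) m := by
          simp only [Matrix.mulVec, dotProduct, Matrix.transpose_apply, hM,
            Matrix.submatrix_apply, id, PiLp.inner_apply, RCLike.inner_apply,
            conj_trivial]
          exact Finset.sum_congr rfl fun i _ => by rw [hcol, mul_comm]
        rw [h1, hMtr]
        rfl
    | zero => simp
    | add x y hx hy ihx ihy => rw [inner_add_left, ihx, ihy, add_zero]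
    | smul c x hx ih => rw [inner_smul_left, ih, mul_zero]

/-- **Partial correlations from residuals (Theorem 2, key identity).**
Let `X ∈ ℝ^{n×(p+2)}` have full column rank (at least two columns), with columns
`x₀, …, x_{p+1}`. For each `j`, let `r_j = x_j − H_{[j]}x_j` be the residual of `x_j`
from its orthogonal projection onto the span of the other columns, where
`H_{[j]} = X_{[j]}(X_{[j]}ᵀX_{[j]})⁻¹X_{[j]}ᵀ`. For `j ≠ k`, let `U` be the span of the
columns other than `x_j, x_k`, and let `a = x_j − P_U(x_j)`, `b = x_k − P_U(x_k)`; the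
sample partial correlation of `x_j` and `x_k` given the remaining columns is
`ρ̂_{jk.R} := ⟨a, b⟩/(‖a‖·‖b‖)`. Then `ρ̂_{jk.R} = −⟨r_j, r_k⟩/(‖r_j‖·‖r_k‖)`;
equivalently, with `g_{jk} = (1/n)⟨r_j, r_k⟩`, one has
`ρ̂_{jk.R} = −g_{jk}/√(g_{jj}·g_{kk})`. -/
theorem partial_correlation_eq_neg_residual_correlation
    {n p : ℕ} (hn : 0 < n)
    (X : Matrix (Fin n) (Fin (p + 2)) ℝ)
    -- the columns of `X`, as elements of Euclidean space
    (col : Fin (p + 2) → EuclideanSpace ℝ (Fin n)) (hcol : ∀ j i, col j i = X i j)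
    -- full column rank
    (hrank : LinearIndependent ℝ col)
    -- residual of column `j` on the remaining columns:
    -- `r_j = x_j − X_{[j]}(X_{[j]}ᵀX_{[j]})⁻¹X_{[j]}ᵀ x_j`
    (r : Fin (p + 2) → Fin n → ℝ)
    (hr : ∀ j, r j = (fun i => X i j) -
      (X.submatrix id j.succAbove *
          ((X.submatrix id j.succAbove)ᵀ * X.submatrix id j.succAbove)⁻¹ *
          (X.submatrix id j.succAbove)ᵀ) *ᵥ (fun i => X i j))
    (j k : Fin (p + 2)) (hjk : j ≠ k)
    -- `U` is the span of the columns other than `x_j` and `x_k`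
    (U : Submodule ℝ (EuclideanSpace ℝ (Fin n)))
    (hU : U = Submodule.span ℝ (col '' {l | l ≠ j ∧ l ≠ k}))
    (a b : EuclideanSpace ℝ (Fin n))
    (ha : a = col j - (U.orthogonalProjection (col j) : EuclideanSpace ℝ (Fin n)))
    (hb : b = col k - (U.orthogonalProjection (col k) : EuclideanSpace ℝ (Fin n)))
    -- `g_{lm} = (1/n)⟨r_l, r_m⟩`
    (g : Fin (p + 2) → Fin (p + 2) → ℝ)
    (hg : ∀ l m, g l m = (1 / n) * (r l ⬝ᵥ r m)) :
    (inner ℝ a b : ℝ) / (‖a‖ * ‖b‖) =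
        -(r j ⬝ᵥ r k) / (Real.sqrt (r j ⬝ᵥ r j) * Real.sqrt (r k ⬝ᵥ r k)) ∧
      (inner ℝ a b : ℝ) / (‖a‖ * ‖b‖) = -g j k / Real.sqrt (g j j * g k k) := by
  classical
  have hspecj := residual_spec X col hcol hrank j (WithLp.toLp 2 (r j)) (fun i => by rw [hr j])
  have hspeck := residual_spec X col hcol hrank k (WithLp.toLp 2 (r k)) (fun i => by rw [hr k])
  set Vj := Submodule.span ℝ (col '' {l | l ≠ j}) with hVj
  set Vk := Submodule.span ℝ (col '' {l | l ≠ k}) with hVk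
  -- basic facts
  have hja : col j ∉ Vj := hrank.notMem_span_image (by simp)
  have hkb : col k ∉ Vk := hrank.notMem_span_image (by simp)
  have hjU : col j ∉ U := by
    rw [hU]; exact hrank.notMem_span_image (by simp)
  have hkU : col k ∉ U := by
    rw [hU]; exact hrank.notMem_span_image (by simp)
  have haU : a ∈ Uᗮ := by rw [ha]; exact U.sub_starProjection_mem_orthogonal _
  have hbU : b ∈ Uᗮ := by rw [hb]; exact U.sub_starProjection_mem_orthogonal _
  have hPa : col j - a ∈ U := by rw [ha, sub_sub_cancel]; exact SetLike.coe_mem _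
  have hPb : col k - b ∈ U := by rw [hb, sub_sub_cancel]; exact SetLike.coe_mem _
  have hane : a ≠ 0 := by
    intro h0
    apply hjU
    have hc : col j = (U.orthogonalProjection (col j) : EuclideanSpace ℝ (Fin n)) :=
      sub_eq_zero.mp (ha.symm.trans h0)
    rw [hc]; exact SetLike.coe_mem _
  have hbne : b ≠ 0 := by
    intro h0
    apply hkU
    have hc : col k = (U.orthogonalProjection (col k) : EuclideanSpace ℝ (Fin n)) :=
      sub_eq_zero.mp (hb.symm.trans h0)
    rw [hc]; exact SetLike.coe_mem _
  have hA : 0 < ‖a‖ := norm_pos_iff.mpr hane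
  have hB : 0 < ‖b‖ := norm_pos_iff.mpr hbne
  have hUVj : U ≤ Vj := by
    rw [hU, hVj]
    exact Submodule.span_mono (Set.image_mono fun l hl => hl.1)
  have hUVk : U ≤ Vk := by
    rw [hU, hVk]
    exact Submodule.span_mono (Set.image_mono fun l hl => hl.2)
  have hbVj : b ∈ Vj := by
    have h1 : col k ∈ Vj := Submodule.subset_span ⟨k, Ne.symm hjk, rfl⟩
    have : b = col k - (col k - b) := by abel
    rw [this]
    exact Submodule.sub_mem _ h1 (hUVj hPb)
  have haVk : a ∈ Vk := by
    have h1 : col j ∈ Vk := Submodule.subset_span ⟨j, hjk, rfl⟩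
    have : a = col j - (col j - a) := by abel
    rw [this]
    exact Submodule.sub_mem _ h1 (hUVk hPa)
  set C : ℝ := inner ℝ a b with hC
  set s : EuclideanSpace ℝ (Fin n) := a - (C / ‖b‖ ^ 2) • b with hs
  set t : EuclideanSpace ℝ (Fin n) := b - (C / ‖a‖ ^ 2) • a with ht
  rw [Submodule.mem_orthogonal] at haU hbU
  have hsUorth : ∀ u ∈ U, (inner ℝ u s : ℝ) = 0 := by
    intro u hu
    rw [hs, inner_sub_right, real_inner_smul_right, haU u hu, hbU u hu]
    ring
  have htUorth : ∀ u ∈ U, (inner ℝ u t : ℝ) = 0 := by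
    intro u hu
    rw [ht, inner_sub_right, real_inner_smul_right, haU u hu, hbU u hu]
    ring
  have hbs : (inner ℝ b s : ℝ) = 0 := by
    rw [hs, inner_sub_right, real_inner_smul_right, real_inner_comm a b, ← hC,
      real_inner_self_eq_norm_sq]
    field_simp
    ring
  have hat : (inner ℝ a t : ℝ) = 0 := by
    rw [ht, inner_sub_right, real_inner_smul_right, ← hC, real_inner_self_eq_norm_sq]
    field_simp
    ring
  have hcoljs : col j - s ∈ Vj := by
    have hrwr : col j - s = (col j - a) + (C / ‖b‖ ^ 2) • b := by
      rw [hs]; abel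
    rw [hrwr]
    exact Submodule.add_mem _ (hUVj hPa) (Submodule.smul_mem _ _ hbVj)
  have hcolkt : col k - t ∈ Vk := by
    have hrwr : col k - t = (col k - b) + (C / ‖a‖ ^ 2) • a := by
      rw [ht]; abel
    rw [hrwr]
    exact Submodule.add_mem _ (hUVk hPb) (Submodule.smul_mem _ _ haVk)
  have hsVjorth : s ∈ Vjᗮ := by
    rw [Submodule.mem_orthogonal]
    intro u hu
    rw [hVj] at hu
    induction hu using Submodule.span_induction with
    | mem x hx =>
        obtain ⟨l, hl, rfl⟩ := hx
        by_cases hlk : l = k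
        · subst hlk
          have hrwr : col l = (col l - b) + b := by abel
          rw [hrwr, inner_add_left, hsUorth _ hPb, hbs, add_zero]
        · exact hsUorth _ (by rw [hU]; exact Submodule.subset_span ⟨l, ⟨hl, hlk⟩, rfl⟩)
    | zero => simp
    | add x y hx hy ihx ihy => rw [inner_add_left, ihx, ihy, add_zero]
    | smul c x hx ih => rw [real_inner_smul_left, ih, mul_zero]
  have htVkorth : t ∈ Vkᗮ := by
    rw [Submodule.mem_orthogonal]
    intro u hu
    rw [hVk] at hu
    induction hu using Submodule.span_induction with
    | mem x hx =>
        obtain ⟨l, hl, rfl⟩ := hx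
        by_cases hlj : l = j
        · subst hlj
          have hrwr : col l = (col l - a) + a := by abel
          rw [hrwr, inner_add_left, htUorth _ hPa, hat, add_zero]
        · exact htUorth _ (by rw [hU]; exact Submodule.subset_span ⟨l, ⟨hlj, hl⟩, rfl⟩)
    | zero => simp
    | add x y hx hy ihx ihy => rw [inner_add_left, ihx, ihy, add_zero]
    | smul c x hx ih => rw [real_inner_smul_left, ih, mul_zero]
  -- identify residuals
  have hrjs := resid_uniq Vj (col j) _ s hspecj.1 hcoljs hspecj.2 hsVjorth
  have hrkt := resid_uniq Vk (col k) _ t hspeck.1 hcolkt hspeck.2 htVkorth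
  have hrjfun : r j = fun i => s i :=
    funext fun i => congrArg (fun v : EuclideanSpace ℝ (Fin n) => v i) hrjs
  have hrkfun : r k = fun i => t i :=
    funext fun i => congrArg (fun v : EuclideanSpace ℝ (Fin n) => v i) hrkt
  have hdot : ∀ x y : EuclideanSpace ℝ (Fin n),
      dotProduct (fun i => x i) (fun i => y i) = (inner ℝ x y : ℝ) := by
    intro x y
    simp [dotProduct, PiLp.inner_apply, RCLike.inner_apply, conj_trivial, mul_comm]
  have hdjk : r j ⬝ᵥ r k = (inner ℝ s t : ℝ) := by rw [hrjfun, hrkfun]; exact hdot s t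
  have hdjj : r j ⬝ᵥ r j = (inner ℝ s s : ℝ) := by rw [hrjfun]; exact hdot s s
  have hdkk : r k ⬝ᵥ r k = (inner ℝ t t : ℝ) := by rw [hrkfun]; exact hdot t t
  -- inner product computations
  have hBne : (‖b‖ : ℝ) ≠ 0 := ne_of_gt hB
  have hAne : (‖a‖ : ℝ) ≠ 0 := ne_of_gt hA
  have hst : (inner ℝ s t : ℝ) = -C + C ^ 3 / (‖a‖ ^ 2 * ‖b‖ ^ 2) := by
    rw [hs, ht]
    simp only [inner_sub_left, inner_sub_right, real_inner_smul_left, real_inner_smul_right]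
    rw [real_inner_comm a b, ← hC, real_inner_self_eq_norm_sq a, real_inner_self_eq_norm_sq b]
    field_simp
    ring
  have hss : (inner ℝ s s : ℝ) = (‖a‖ ^ 2 * ‖b‖ ^ 2 - C ^ 2) / ‖b‖ ^ 2 := by
    rw [hs]
    simp only [inner_sub_left, inner_sub_right, real_inner_smul_left, real_inner_smul_right]
    rw [real_inner_comm a b, ← hC, real_inner_self_eq_norm_sq a, real_inner_self_eq_norm_sq b]
    field_simp
    ring
  have htt : (inner ℝ t t : ℝ) = (‖a‖ ^ 2 * ‖b‖ ^ 2 - C ^ 2) / ‖a‖ ^ 2 := by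
    rw [ht]
    simp only [inner_sub_left, inner_sub_right, real_inner_smul_left, real_inner_smul_right]
    rw [real_inner_comm a b, ← hC, real_inner_self_eq_norm_sq a, real_inner_self_eq_norm_sq b]
    field_simp
    ring
  have hsne : s ≠ 0 := by
    intro h0
    apply hja
    have := hspecj.1
    rw [hrjs, h0, sub_zero] at this
    exact this
  have htne : t ≠ 0 := by
    intro h0
    apply hkb
    have := hspeck.1
    rw [hrkt, h0, sub_zero] at this
    exact this
  have hD : 0 < ‖a‖ ^ 2 * ‖b‖ ^ 2 - C ^ 2 := by
    have h1 : 0 < (inner ℝ s s : ℝ) := by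
      rw [real_inner_self_eq_norm_sq]; exact pow_pos (norm_pos_iff.mpr hsne) 2
    rw [hss] at h1
    rcases div_pos_iff.mp h1 with ⟨h2, _⟩ | ⟨_, h2⟩
    · exact h2
    · exact absurd h2 (not_lt.mpr (by positivity))
  have main : C / (‖a‖ * ‖b‖) =
      -(r j ⬝ᵥ r k) / (Real.sqrt (r j ⬝ᵥ r j) * Real.sqrt (r k ⬝ᵥ r k)) := by
    rw [hdjk, hdjj, hdkk, hst, hss, htt,
      Real.sqrt_div hD.le, Real.sqrt_div hD.le, Real.sqrt_sq hB.le, Real.sqrt_sq hA.le,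
      div_mul_div_comm, Real.mul_self_sqrt hD.le]
    field_simp
    ring
  refine ⟨main, main.trans ?_⟩
  rw [hg j k, hg j j, hg k k, hdjk, hdjj, hdkk]
  have hn0 : (0 : ℝ) < 1 / (n : ℝ) := by positivity
  have hssnn : (0:ℝ) ≤ (inner ℝ s s : ℝ) := real_inner_self_nonneg
  have httnn : (0:ℝ) ≤ (inner ℝ t t : ℝ) := real_inner_self_nonneg
  have h5 : (1/(n:ℝ)) * (inner ℝ s s : ℝ) * ((1/(n:ℝ)) * (inner ℝ t t : ℝ))
      = ((1/(n:ℝ)) * (1/(n:ℝ))) * ((inner ℝ s s : ℝ) * (inner ℝ t t : ℝ)) := by ring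
  rw [h5, Real.sqrt_mul (by positivity), Real.sqrt_mul_self hn0.le,
    Real.sqrt_mul hssnn]
  have hsp : 0 < Real.sqrt (inner ℝ s s : ℝ) := Real.sqrt_pos.mpr (by
    rw [real_inner_self_eq_norm_sq]; exact pow_pos (norm_pos_iff.mpr hsne) 2)
  have htp : 0 < Real.sqrt (inner ℝ t t : ℝ) := Real.sqrt_pos.mpr (by
    rw [real_inner_self_eq_norm_sq]; exact pow_pos (norm_pos_iff.mpr htne) 2)
  have hnn : ((n : ℝ)) ≠ 0 := by positivity
  rw [neg_div, neg_div, neg_inj, mul_div_mul_left _ _ (ne_of_gt hn0)]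
end

section
/- Let X₂ ∈ ℝ^{n₂×p} have full column rank, and let β̂ ∈ ℝ^p define the linear prediction function m̂(x) = xᵀβ̂. For each j let x̂_{2.j} = H_{[j]}x_{2.j} be the ghost variable of the j-th column, let X₂.ĵ be X₂ with its j-th column replaced by x̂_{2.j}, and set Ŷ₂ = X₂β̂, Ŷ₂.ĵ = X₂.ĵβ̂. Then the matrix A = (Ŷ₂ − Ŷ₂.1̂, …, Ŷ₂ − Ŷ₂.p̂) equals (X₂ − X̂₂)·diag(β̂), where X̂₂ is the matrix whose j-th column is x̂_{2.j}; consequently the relevance matrix V = (1/n₂)AᵀA equals diag(β̂)·G·diag(β̂) with G = (1/n₂)(X₂ − X̂₂)ᵀ(X₂ − X̂₂), so that entrywise v_{jk} = β̂_j β̂_k g_{jk}, and in particular the j-th diagonal element of V equals β̂_j²·σ̂²_{[j]} where σ̂²_{[j]} = g_{jj} = (1/n₂)‖x_{2.j} − x̂_{2.j}‖². -/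
/-!
Replacing the `j`-th column of `X₂` by `x̂_{2.j}` changes the prediction `X₂β̂` by exactly
`β̂_j (x_{2.j} − x̂_{2.j})`, so `A = (X₂ − X̂₂)·diag(β̂)`; the formula for `V` is then the Gram
matrix of a matrix scaled on the right by a diagonal.
-/

open Matrix

namespace Matrix

theorem mulVec_sub_updateCol_mulVec_apply {m n R : Type*} [Fintype n] [DecidableEq n]
    [Ring R] (M : Matrix m n R) (j : n) (c : m → R) (v : n → R) (i : m) :
    (M *ᵥ v) i - (M.updateCol j c *ᵥ v) i = (M i j - c i) * v j := by
  have hterm : ∀ k, M i k * v k - M.updateCol j c i k * v k =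
      if k = j then (M i j - c i) * v j else 0 := by
    intro k
    by_cases hk : k = j
    · subst hk; simp [sub_mul]
    · simp [hk]
  simp only [mulVec, dotProduct, ← Finset.sum_sub_distrib, hterm, Finset.sum_ite_eq',
    Finset.mem_univ, if_true]

theorem of_mulVec_sub_updateCol_mulVec {m n R : Type*} [Fintype n] [DecidableEq n]
    [Ring R] (M : Matrix m n R) (c : n → m → R) (v : n → R) :
    (of fun i j => (M *ᵥ v) i - (M.updateCol j (c j) *ᵥ v) i) =
      (M - of fun i j => c j i) * diagonal v := by
  ext i j
  simp [mulVec_sub_updateCol_mulVec_apply]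

theorem transpose_mul_self_mul_diagonal {m n R : Type*} [Fintype m] [Fintype n]
    [DecidableEq n] [CommSemiring R] (B : Matrix m n R) (v : n → R) :
    (B * diagonal v)ᵀ * (B * diagonal v) = diagonal v * (Bᵀ * B) * diagonal v := by
  simp only [transpose_mul, diagonal_transpose, Matrix.mul_assoc]

theorem transpose_mul_self_apply_diag {m n R : Type*} [Fintype m] [CommSemiring R]
    (B : Matrix m n R) (j : n) :
    (Bᵀ * B) j j = (fun i => B i j) ⬝ᵥ (fun i => B i j) := mul_apply'

theorem diagonal_mul_mul_diagonal_apply {n R : Type*} [Fintype n] [DecidableEq n]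
    [CommSemiring R] (v w : n → R) (G : Matrix n n R) (j k : n) :
    (diagonal v * G * diagonal w) j k = v j * w k * G j k := by
  simp only [mul_diagonal, diagonal_mul]
  ring

end Matrix

theorem relevance_matrix_linear_regression_general
    {n₂ p : ℕ}
    (X₂ : Matrix (Fin n₂) (Fin (p + 1)) ℝ)
    (β : Fin (p + 1) → ℝ)
    -- ghost variable of the `j`-th column:
    -- `x̂_{2.j} = X_{2.[j]}(X_{2.[j]}ᵀX_{2.[j]})⁻¹X_{2.[j]}ᵀ x_{2.j}`
    (ghost : Fin (p + 1) → Fin n₂ → ℝ)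
    -- `X̂₂` : the matrix whose `j`-th column is the ghost variable `x̂_{2.j}`
    (Xhat : Matrix (Fin n₂) (Fin (p + 1)) ℝ)
    (hXhat : Xhat = Matrix.of fun i j => ghost j i)
    -- `A`: the matrix whose `j`-th column is `Ŷ₂ − Ŷ₂.ĵ`, where `Ŷ₂ = X₂β̂` and
    -- `Ŷ₂.ĵ = X₂.ĵβ̂` with `X₂.ĵ = X₂` with its `j`-th column replaced by `x̂_{2.j}`
    (A : Matrix (Fin n₂) (Fin (p + 1)) ℝ)
    (hA : A = Matrix.of fun i j =>
      (X₂ *ᵥ β) i - ((X₂.updateCol j (ghost j)) *ᵥ β) i)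
    -- the relevance matrix `V = (1/n₂)AᵀA`
    (V : Matrix (Fin (p + 1)) (Fin (p + 1)) ℝ) (hV : V = (1 / n₂ : ℝ) • (Aᵀ * A))
    -- `G = (1/n₂)(X₂ − X̂₂)ᵀ(X₂ − X̂₂)`
    (G : Matrix (Fin (p + 1)) (Fin (p + 1)) ℝ)
    (hG : G = (1 / n₂ : ℝ) • ((X₂ - Xhat)ᵀ * (X₂ - Xhat))) :
    A = (X₂ - Xhat) * Matrix.diagonal β ∧
      V = Matrix.diagonal β * G * Matrix.diagonal β ∧
      (∀ j k, V j k = β j * β k * G j k) ∧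
      (∀ j, G j j = (1 / n₂ : ℝ) *
        (((fun i => X₂ i j) - ghost j) ⬝ᵥ ((fun i => X₂ i j) - ghost j))) ∧
      (∀ j, V j j = β j ^ 2 * G j j) := by
  have hAeq : A = (X₂ - Xhat) * diagonal β := by
    rw [hA, hXhat, of_mulVec_sub_updateCol_mulVec]
  have hVeq : V = diagonal β * G * diagonal β := by
    rw [hV, hG, hAeq, transpose_mul_self_mul_diagonal, Matrix.mul_smul, Matrix.smul_mul]
  have hVapply : ∀ j k, V j k = β j * β k * G j k := fun j k => by
    rw [hVeq, diagonal_mul_mul_diagonal_apply]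
  refine ⟨hAeq, hVeq, hVapply, fun j => ?_, fun j => by rw [hVapply, sq]⟩
  rw [hG, Matrix.smul_apply, transpose_mul_self_apply_diag, smul_eq_mul, hXhat]
  rfl

/-- **Structure of the relevance matrix in linear regression.**
Let `X₂ ∈ ℝ^{n₂×(p+1)}` have full column rank, and let `β̂` define the linear prediction
`m̂(x) = xᵀβ̂`. For each `j`, let `x̂_{2.j} = H_{[j]}x_{2.j}` be the ghost variable of the
`j`-th column, let `X₂.ĵ` be `X₂` with its `j`-th column replaced by `x̂_{2.j}`, and set
`Ŷ₂ = X₂β̂`, `Ŷ₂.ĵ = X₂.ĵβ̂`. Then `A = (Ŷ₂ − Ŷ₂.0̂, …, Ŷ₂ − Ŷ₂.p̂)` equals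
`(X₂ − X̂₂)·diag(β̂)`; consequently the relevance matrix `V = (1/n₂)AᵀA` equals
`diag(β̂)·G·diag(β̂)` with `G = (1/n₂)(X₂ − X̂₂)ᵀ(X₂ − X̂₂)`, entrywise
`v_{jk} = β̂_j β̂_k g_{jk}`, and in particular `v_{jj} = β̂_j²·σ̂²_{[j]}` with
`σ̂²_{[j]} = g_{jj} = (1/n₂)‖x_{2.j} − x̂_{2.j}‖²`. -/
theorem relevance_matrix_linear_regression
    {n₂ p : ℕ} (hn₂ : 0 < n₂)
    (X₂ : Matrix (Fin n₂) (Fin (p + 1)) ℝ)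
    -- full column rank
    (hrank : LinearIndependent ℝ (fun j : Fin (p + 1) => fun i : Fin n₂ => X₂ i j))
    (β : Fin (p + 1) → ℝ)
    -- ghost variable of the `j`-th column:
    -- `x̂_{2.j} = X_{2.[j]}(X_{2.[j]}ᵀX_{2.[j]})⁻¹X_{2.[j]}ᵀ x_{2.j}`
    (ghost : Fin (p + 1) → Fin n₂ → ℝ)
    (hghost : ∀ j, ghost j =
      (X₂.submatrix id j.succAbove *
          ((X₂.submatrix id j.succAbove)ᵀ * X₂.submatrix id j.succAbove)⁻¹ *
          (X₂.submatrix id j.succAbove)ᵀ) *ᵥ (fun i => X₂ i j))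
    -- `X̂₂` : the matrix whose `j`-th column is the ghost variable `x̂_{2.j}`
    (Xhat : Matrix (Fin n₂) (Fin (p + 1)) ℝ)
    (hXhat : Xhat = Matrix.of fun i j => ghost j i)
    -- `A`: the matrix whose `j`-th column is `Ŷ₂ − Ŷ₂.ĵ`, where `Ŷ₂ = X₂β̂` and
    -- `Ŷ₂.ĵ = X₂.ĵβ̂` with `X₂.ĵ = X₂` with its `j`-th column replaced by `x̂_{2.j}`
    (A : Matrix (Fin n₂) (Fin (p + 1)) ℝ)
    (hA : A = Matrix.of fun i j =>
      (X₂ *ᵥ β) i - ((X₂.updateCol j (ghost j)) *ᵥ β) i)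
    -- the relevance matrix `V = (1/n₂)AᵀA`
    (V : Matrix (Fin (p + 1)) (Fin (p + 1)) ℝ) (hV : V = (1 / n₂ : ℝ) • (Aᵀ * A))
    -- `G = (1/n₂)(X₂ − X̂₂)ᵀ(X₂ − X̂₂)`
    (G : Matrix (Fin (p + 1)) (Fin (p + 1)) ℝ)
    (hG : G = (1 / n₂ : ℝ) • ((X₂ - Xhat)ᵀ * (X₂ - Xhat))) :
    A = (X₂ - Xhat) * Matrix.diagonal β ∧
      V = Matrix.diagonal β * G * Matrix.diagonal β ∧
      (∀ j k, V j k = β j * β k * G j k) ∧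
      (∀ j, G j j = (1 / n₂ : ℝ) *
        (((fun i => X₂ i j) - ghost j) ⬝ᵥ ((fun i => X₂ i j) - ghost j))) ∧
      (∀ j, V j j = β j ^ 2 * G j j) :=
  relevance_matrix_linear_regression_general X₂ β ghost Xhat hXhat A hA V hV G hG
end

section
/- Let X ∈ ℝ^{n×p} have full column rank (so XᵀX is invertible), with columns x₁, …, x_p, and for each j let r_j = x_j − H_{[j]}x_j be the residual of x_j from its orthogonal projection onto the span of the other columns. Then for all indices j, k, the (j,k) entry of (XᵀX)⁻¹ equals ⟨r_j, r_k⟩/(‖r_j‖²·‖r_k‖²); in particular, the j-th diagonal entry of (XᵀX)⁻¹ equals 1/‖r_j‖². Equivalently, the matrix with entries ⟨r_j, r_k⟩ equals D·(XᵀX)⁻¹·D where D = diag(‖r₁‖², …, ‖r_p‖²). -/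
/-!
Write `S = XᵀX` and `d_j = ‖r_j‖²`. The residual `r_j` is orthogonal to every column of `X` except
the `j`-th, and `⟨x_j, r_j⟩ = ‖r_j‖²`, so `Xᵀ r_j = d_j e_j`. On the other hand `r_j = X c_j` for a
coefficient vector with `(c_j)_j = 1`, hence `S c_j = d_j e_j`, i.e. `c_j = d_j S⁻¹ e_j`. Its `j`-th
coordinate gives `d_j (S⁻¹)_{jj} = 1`, and `⟨r_j, r_k⟩ = ⟨c_j, Xᵀ r_k⟩ = d_k (c_j)_k = d_j d_k (S⁻¹)_{jk}`.
-/

open Matrix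

namespace Matrix

theorem isUnit_det_transpose_mul_self {R m n : Type*} [Field R] [LinearOrder R]
    [IsStrictOrderedRing R] [Fintype m] [Fintype n] [DecidableEq n] {A : Matrix m n R}
    (hA : LinearIndependent R A.col) : IsUnit (Aᵀ * A).det := by
  rw [← isUnit_iff_isUnit_det, ← mulVec_injective_iff_isUnit, ← coe_mulVecLin,
    ← LinearMap.ker_eq_bot, ker_mulVecLin_transpose_mul_self, LinearMap.ker_eq_bot,
    coe_mulVecLin, mulVec_injective_iff]
  exact hA

section Residual

variable {R ι κ : Type*} [CommRing R] [Fintype ι] [Fintype κ] [DecidableEq κ]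

noncomputable def residual (Y : Matrix ι κ R) (x : ι → R) : ι → R :=
  x - (Y * (Yᵀ * Y)⁻¹ * Yᵀ) *ᵥ x

theorem residual_eq_sub_mulVec (Y : Matrix ι κ R) (x : ι → R) :
    residual Y x = x - Y *ᵥ ((Yᵀ * Y)⁻¹ *ᵥ (Yᵀ *ᵥ x)) := by
  rw [residual, mulVec_mulVec, mulVec_mulVec, Matrix.mul_assoc]

theorem transpose_mulVec_residual {Y : Matrix ι κ R} (hY : IsUnit (Yᵀ * Y).det) (x : ι → R) :
    Yᵀ *ᵥ residual Y x = 0 := by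
  rw [residual_eq_sub_mulVec, mulVec_sub, mulVec_mulVec, mulVec_mulVec, mul_nonsing_inv _ hY,
    one_mulVec, sub_self]

theorem dotProduct_residual {Y : Matrix ι κ R} (hY : IsUnit (Yᵀ * Y).det) (x : ι → R) :
    x ⬝ᵥ residual Y x = residual Y x ⬝ᵥ residual Y x := by
  have hx : x = residual Y x + Y *ᵥ ((Yᵀ * Y)⁻¹ *ᵥ (Yᵀ *ᵥ x)) := by
    rw [residual_eq_sub_mulVec, sub_add_cancel]
  nth_rw 1 [hx]
  rw [add_dotProduct, ← vecMul_transpose, ← dotProduct_mulVec, transpose_mulVec_residual hY,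
    dotProduct_zero, add_zero]

end Residual

section Columns

variable {R ι : Type*} [CommRing R] {p : ℕ}

theorem mulVec_insertNth (X : Matrix ι (Fin (p + 1)) R) (j : Fin (p + 1)) (a : R)
    (b : Fin p → R) :
    X *ᵥ Fin.insertNth j a b = a • X.col j + X.submatrix id j.succAbove *ᵥ b := by
  ext i
  simp [mulVec, dotProduct, Fin.sum_univ_succAbove _ j, mul_comm]

variable [Fintype ι]

theorem transpose_mulVec_eq_insertNth (X : Matrix ι (Fin (p + 1)) R) (j : Fin (p + 1))
    (v : ι → R) :
    Xᵀ *ᵥ v = Fin.insertNth j (X.col j ⬝ᵥ v) ((X.submatrix id j.succAbove)ᵀ *ᵥ v) := by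
  ext k
  induction k using Fin.succAboveCases j <;> simp [mulVec, dotProduct]

theorem exists_mulVec_eq_residual_col (X : Matrix ι (Fin (p + 1)) R) (j : Fin (p + 1)) :
    ∃ c, X *ᵥ c = residual (X.submatrix id j.succAbove) (X.col j) ∧ c j = 1 := by
  refine ⟨Fin.insertNth j 1 (-(((X.submatrix id j.succAbove)ᵀ * X.submatrix id j.succAbove)⁻¹ *ᵥ
    ((X.submatrix id j.succAbove)ᵀ *ᵥ X.col j))), ?_, Fin.insertNth_apply_same _ _ _⟩
  rw [mulVec_insertNth, one_smul, mulVec_neg, ← sub_eq_add_neg, residual_eq_sub_mulVec]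

theorem transpose_mulVec_residual_col {X : Matrix ι (Fin (p + 1)) R} {j : Fin (p + 1)}
    (hY : IsUnit ((X.submatrix id j.succAbove)ᵀ * X.submatrix id j.succAbove).det) :
    Xᵀ *ᵥ residual (X.submatrix id j.succAbove) (X.col j) =
      Pi.single j (residual (X.submatrix id j.succAbove) (X.col j) ⬝ᵥ
        residual (X.submatrix id j.succAbove) (X.col j)) := by
  rw [transpose_mulVec_eq_insertNth X j, transpose_mulVec_residual hY, dotProduct_residual hY,
    Fin.insertNth_zero_right]

end Columns

section InverseGram

variable {R ι κ : Type*} [CommRing R] [Fintype ι] [Fintype κ] [DecidableEq κ]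
  {X : Matrix ι κ R}

theorem eq_inv_gram_mulVec_of_mulVec_eq (hX : IsUnit (Xᵀ * X).det) {c : κ → R} {v : ι → R}
    (hc : X *ᵥ c = v) : c = (Xᵀ * X)⁻¹ *ᵥ (Xᵀ *ᵥ v) := by
  rw [← hc, mulVec_mulVec c Xᵀ, mulVec_mulVec, nonsing_inv_mul _ hX, one_mulVec]

theorem apply_eq_inv_gram_mul_of_transpose_mulVec_eq_single (hX : IsUnit (Xᵀ * X).det)
    {c : κ → R} {v : ι → R} {j : κ} {d : R} (hc : X *ᵥ c = v)
    (hv : Xᵀ *ᵥ v = Pi.single j d) (k : κ) : c k = (Xᵀ * X)⁻¹ j k * d := by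
  have hsymm : (Xᵀ * X).IsSymm := by rw [IsSymm, transpose_mul, transpose_transpose]
  rw [eq_inv_gram_mulVec_of_mulVec_eq hX hc, hv, mulVec_single, Pi.smul_apply, col_apply,
    op_smul_eq_mul, hsymm.inv.apply]

theorem dotProduct_eq_mul_inv_gram_apply (hX : IsUnit (Xᵀ * X).det) {r : κ → ι → R}
    {d : κ → R} (hr : ∀ j, Xᵀ *ᵥ r j = Pi.single j (d j)) (hrange : ∀ j, ∃ c, X *ᵥ c = r j)
    (j k : κ) : r j ⬝ᵥ r k = d j * d k * (Xᵀ * X)⁻¹ j k := by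
  obtain ⟨c, hc⟩ := hrange j
  rw [← hc, ← vecMul_transpose, ← dotProduct_mulVec, hr k, dotProduct_single,
    apply_eq_inv_gram_mul_of_transpose_mulVec_eq_single hX hc (hr j)]
  ring

end InverseGram

end Matrix

theorem inv_gram_entries_eq_residual_inner_general
    {n p : ℕ}
    (X : Matrix (Fin n) (Fin (p + 1)) ℝ)
    -- full column rank
    (hrank : LinearIndependent ℝ (fun j : Fin (p + 1) => fun i : Fin n => X i j))
    -- residual of column `j` on the remaining columns:
    -- `r_j = x_j − X_{[j]}(X_{[j]}ᵀX_{[j]})⁻¹X_{[j]}ᵀ x_j`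
    (r : Fin (p + 1) → Fin n → ℝ)
    (hr : ∀ j, r j = (fun i => X i j) -
      (X.submatrix id j.succAbove *
          ((X.submatrix id j.succAbove)ᵀ * X.submatrix id j.succAbove)⁻¹ *
          (X.submatrix id j.succAbove)ᵀ) *ᵥ (fun i => X i j))
    (D : Matrix (Fin (p + 1)) (Fin (p + 1)) ℝ)
    (hD : D = Matrix.diagonal fun j => r j ⬝ᵥ r j) :
    (∀ j k, (Xᵀ * X)⁻¹ j k = (r j ⬝ᵥ r k) / ((r j ⬝ᵥ r j) * (r k ⬝ᵥ r k))) ∧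
      (∀ j, (Xᵀ * X)⁻¹ j j = 1 / (r j ⬝ᵥ r j)) ∧
      (Matrix.of fun j k => r j ⬝ᵥ r k) = D * (Xᵀ * X)⁻¹ * D := by
  have hres : ∀ j, r j = residual (X.submatrix id j.succAbove) (X.col j) := hr
  have hX : IsUnit (Xᵀ * X).det := isUnit_det_transpose_mul_self hrank
  have hXr (j) : Xᵀ *ᵥ r j = Pi.single j (r j ⬝ᵥ r j) := by
    rw [hres j]
    exact transpose_mulVec_residual_col <| isUnit_det_transpose_mul_self <|
      hrank.comp _ Fin.succAbove_right_injective
  have hdiag (j) : (Xᵀ * X)⁻¹ j j * (r j ⬝ᵥ r j) = 1 := by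
    obtain ⟨c, hc, hcj⟩ := exists_mulVec_eq_residual_col X j
    rw [← hcj, apply_eq_inv_gram_mul_of_transpose_mulVec_eq_single hX (hc.trans (hres j).symm)
      (hXr j)]
  have hne (j) : r j ⬝ᵥ r j ≠ 0 := right_ne_zero_of_mul_eq_one (hdiag j)
  have hinner := dotProduct_eq_mul_inv_gram_apply hX hXr fun j =>
    (exists_mulVec_eq_residual_col X j).imp fun c hc => hc.1.trans (hres j).symm
  refine ⟨fun j k => ?_, fun j => eq_one_div_of_mul_eq_one_left (hdiag j), ?_⟩
  · rw [hinner, mul_div_cancel_left₀ _ (mul_ne_zero (hne j) (hne k))]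
  · ext j k
    rw [hD, mul_diagonal, diagonal_mul, of_apply, hinner]
    ring

/-- **Entries of `(XᵀX)⁻¹` via residuals (Corollary, relation between `G` and `S⁻¹`).**
Let `X ∈ ℝ^{n×(p+1)}` have full column rank (so `XᵀX` is invertible), with columns
`x₀, …, x_p`, and for each `j` let `r_j = x_j − H_{[j]}x_j` be the residual of `x_j` from
its orthogonal projection onto the span of the other columns, where
`H_{[j]} = X_{[j]}(X_{[j]}ᵀX_{[j]})⁻¹X_{[j]}ᵀ`. Then for all `j, k`, the `(j,k)` entry of
`(XᵀX)⁻¹` equals `⟨r_j, r_k⟩/(‖r_j‖²·‖r_k‖²)`; in particular the `j`-th diagonal entry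
equals `1/‖r_j‖²`. Equivalently, the matrix with entries `⟨r_j, r_k⟩` equals
`D·(XᵀX)⁻¹·D` with `D = diag(‖r₀‖², …, ‖r_p‖²)`. -/
theorem inv_gram_entries_eq_residual_inner
    {n p : ℕ} (hn : 0 < n)
    (X : Matrix (Fin n) (Fin (p + 1)) ℝ)
    -- full column rank
    (hrank : LinearIndependent ℝ (fun j : Fin (p + 1) => fun i : Fin n => X i j))
    -- so `XᵀX` is invertible
    (hXunit : IsUnit (Xᵀ * X).det)
    -- residual of column `j` on the remaining columns:
    -- `r_j = x_j − X_{[j]}(X_{[j]}ᵀX_{[j]})⁻¹X_{[j]}ᵀ x_j`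
    (r : Fin (p + 1) → Fin n → ℝ)
    (hr : ∀ j, r j = (fun i => X i j) -
      (X.submatrix id j.succAbove *
          ((X.submatrix id j.succAbove)ᵀ * X.submatrix id j.succAbove)⁻¹ *
          (X.submatrix id j.succAbove)ᵀ) *ᵥ (fun i => X i j))
    (D : Matrix (Fin (p + 1)) (Fin (p + 1)) ℝ)
    (hD : D = Matrix.diagonal fun j => r j ⬝ᵥ r j) :
    (∀ j k, (Xᵀ * X)⁻¹ j k = (r j ⬝ᵥ r k) / ((r j ⬝ᵥ r j) * (r k ⬝ᵥ r k))) ∧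
      (∀ j, (Xᵀ * X)⁻¹ j j = 1 / (r j ⬝ᵥ r j)) ∧
      (Matrix.of fun j k => r j ⬝ᵥ r k) = D * (Xᵀ * X)⁻¹ * D :=
  inv_gram_entries_eq_residual_inner_general X hrank r hr D hD
end

section
/- Let a and b be two linearly independent vectors of a real inner product space (so in particular a − P_b(a) ≠ 0 and b − P_a(b) ≠ 0). Then cos(α(a − P_b(a), b − P_a(b))) = −cos(α(a, b)), where α(u, v) denotes the angle between two nonzero vectors u and v. -/
/-! The residual `r = a - P_b a` is orthogonal to `b` and `s = b - P_a b` is orthogonal to `a`,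
so `⟪r, s⟫ = -(⟪a, b⟫ / ‖a‖²) ‖r‖²`. Lagrange's identity
`‖r‖² ‖b‖² = ‖a‖² ‖b‖² - ⟪a, b⟫² = ‖s‖² ‖a‖²` gives `‖r‖ / ‖s‖ = ‖a‖ / ‖b‖`, and the two
combine to `⟪r, s⟫ / (‖r‖ ‖s‖) = -⟪a, b⟫ / (‖a‖ ‖b‖)`. -/

open RealInnerProductSpace InnerProductGeometry

noncomputable section

variable {E : Type*} [NormedAddCommGroup E] [InnerProductSpace ℝ E]

def lineProj (y x : E) : E := (⟪x, y⟫ / ‖y‖ ^ 2) • y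

theorem inner_lineProj_right (y x z : E) : ⟪z, lineProj y x⟫ = ⟪x, y⟫ / ‖y‖ ^ 2 * ⟪z, y⟫ :=
  real_inner_smul_right _ _ _

theorem inner_sub_lineProj_self (y x : E) : ⟪x - lineProj y x, y⟫ = 0 := by
  rcases eq_or_ne y 0 with rfl | hy
  · simp
  · rw [lineProj, inner_sub_left, real_inner_smul_left, real_inner_self_eq_norm_sq,
      div_mul_cancel₀ _ (by positivity), sub_self]

theorem inner_sub_lineProj_left (y x : E) :
    ⟪x - lineProj y x, x⟫ = ‖x - lineProj y x‖ ^ 2 := by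
  have h : ⟪x - lineProj y x, lineProj y x⟫ = 0 := by
    rw [inner_lineProj_right, inner_sub_lineProj_self, mul_zero]
  rw [← real_inner_self_eq_norm_sq, inner_sub_right (x - lineProj y x), h, sub_zero]

theorem norm_sub_lineProj_sq_mul_norm_sq (y x : E) :
    ‖x - lineProj y x‖ ^ 2 * ‖y‖ ^ 2 = ‖x‖ ^ 2 * ‖y‖ ^ 2 - ⟪x, y⟫ ^ 2 := by
  rcases eq_or_ne y 0 with rfl | hy
  · simp
  · rw [← inner_sub_lineProj_left, lineProj, inner_sub_left, real_inner_self_eq_norm_sq,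
      real_inner_smul_left, real_inner_comm y x]
    field_simp

theorem norm_sub_lineProj_mul_norm (x y : E) :
    ‖x - lineProj y x‖ * ‖y‖ = ‖y - lineProj x y‖ * ‖x‖ := by
  rw [← sq_eq_sq₀ (by positivity) (by positivity), mul_pow, mul_pow,
    norm_sub_lineProj_sq_mul_norm_sq, norm_sub_lineProj_sq_mul_norm_sq, real_inner_comm]
  ring

theorem inner_sub_lineProj_sub_lineProj (x y : E) :
    ⟪x - lineProj y x, y - lineProj x y⟫ = -(⟪x, y⟫ / ‖x‖ ^ 2) * ‖x - lineProj y x‖ ^ 2 := by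
  rw [inner_sub_right, inner_sub_lineProj_self, inner_lineProj_right, inner_sub_lineProj_left,
    real_inner_comm y x]
  ring

theorem sub_lineProj_ne_zero_of_linearIndependent {x y : E}
    (h : LinearIndependent ℝ ![x, y]) : y - lineProj x y ≠ 0 := by
  intro h0
  exact one_ne_zero (LinearIndependent.pair_iff.mp h (-(⟪y, x⟫ / ‖x‖ ^ 2)) 1
    (by rw [neg_smul, one_smul, ← sub_eq_neg_add, ← h0, lineProj])).2

end

/-- **Lemma (residual angle reversal).**
Let `a` and `b` be two linearly independent vectors of a real inner product space (so in
particular `a − P_b(a) ≠ 0` and `b − P_a(b) ≠ 0`). Then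
`cos(α(a − P_b(a), b − P_a(b))) = −cos(α(a, b))`, where `P_b(x) = (⟨x,b⟩/‖b‖²)·b` is the
orthogonal projection onto the line spanned by `b` and `α(u,v)` is the angle between the
nonzero vectors `u` and `v`. -/
theorem cos_angle_residuals_eq_neg_cos_angle
    {E : Type*} [NormedAddCommGroup E] [InnerProductSpace ℝ E]
    (a b : E) (hab : LinearIndependent ℝ ![a, b])
    (Pba : E) (hPba : Pba = ((inner ℝ a b : ℝ) / ‖b‖ ^ 2) • b)
    (Pab : E) (hPab : Pab = ((inner ℝ b a : ℝ) / ‖a‖ ^ 2) • a) :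
    Real.cos (InnerProductGeometry.angle (a - Pba) (b - Pab)) =
      -Real.cos (InnerProductGeometry.angle a b) := by
  obtain rfl : Pba = lineProj b a := hPba
  obtain rfl : Pab = lineProj a b := hPab
  have ha : ‖a‖ ≠ 0 := norm_ne_zero_iff.mpr (hab.ne_zero 0)
  have hb : ‖b‖ ≠ 0 := norm_ne_zero_iff.mpr (hab.ne_zero 1)
  have hs : ‖b - lineProj a b‖ ≠ 0 :=
    norm_ne_zero_iff.mpr (sub_lineProj_ne_zero_of_linearIndependent hab)
  have hr : ‖a - lineProj b a‖ = ‖b - lineProj a b‖ * ‖a‖ / ‖b‖ := by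
    rw [← norm_sub_lineProj_mul_norm, mul_div_cancel_right₀ _ hb]
  rw [cos_angle, cos_angle, inner_sub_lineProj_sub_lineProj, hr]
  field_simp
end

section
/- Under the stated OLS setup, the relevance by omission of Z evaluated in the training sample, Rel_Om^Train(Z) := (1/n₁)·‖(X₁β̂_x + z₁β̂_z) − X₁β̂₀‖², satisfies Rel_Om^Train(Z) = β̂_z²·k/n₁ = β̂_z²·σ̂²_{z.x,n₁}, and consequently, if σ̂² > 0, (n₁/σ̂²)·Rel_Om^Train(Z) = F_z, where F_z := β̂_z²·k/σ̂² is the F-test statistic for the null hypothesis β_z = 0. -/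
/-!
The first `p` rows of the normal equations of the joint fit say
`X₁ᵀ(X₁β̂_x + β̂_z z₁) = X₁ᵀy₁`. Applying `(X₁ᵀX₁)⁻¹` gives the omitted-variable formula
`β̂₀ = β̂_x + β̂_z α̂₁`, so the two fitted vectors differ by `β̂_z (z₁ − ẑ₁)`, whose squared
length is `β̂_z² k`. The other two identities are rearrangements of this one.
-/

open Matrix

section OLS

variable {m n : Type*} [Fintype m] [Fintype n] [DecidableEq n]

theorem Matrix.transpose_mulVec_mulVec_ols (A : Matrix m n ℝ) (hA : IsUnit (Aᵀ * A).det)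
    (y : m → ℝ) : Aᵀ *ᵥ (A *ᵥ ((Aᵀ * A)⁻¹ *ᵥ (Aᵀ *ᵥ y))) = Aᵀ *ᵥ y := by
  rw [mulVec_mulVec, mulVec_mulVec, mul_nonsing_inv _ hA, one_mulVec]

theorem Matrix.ols_eq_add_smul_of_normal_eq (X : Matrix m n ℝ) (hX : IsUnit (Xᵀ * X).det)
    {β : n → ℝ} {c : ℝ} {y z : m → ℝ} (h : Xᵀ *ᵥ (X *ᵥ β + c • z) = Xᵀ *ᵥ y) :
    (Xᵀ * X)⁻¹ *ᵥ (Xᵀ *ᵥ y) = β + c • ((Xᵀ * X)⁻¹ *ᵥ (Xᵀ *ᵥ z)) := by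
  rw [← h, mulVec_add, mulVec_smul, mulVec_add, mulVec_smul, mulVec_mulVec β,
    mulVec_mulVec β, nonsing_inv_mul _ hX, one_mulVec]

end OLS

section Augment

variable {m : Type*} {p : ℕ}

def Matrix.appendCol (X : Matrix m (Fin p) ℝ) (z : m → ℝ) : Matrix m (Fin (p + 1)) ℝ :=
  of fun i j => Fin.lastCases (z i) (fun j' => X i j') j

theorem Matrix.appendCol_mulVec (X : Matrix m (Fin p) ℝ) (z : m → ℝ) (b : Fin (p + 1) → ℝ) :
    X.appendCol z *ᵥ b = X *ᵥ (fun j => b j.castSucc) + b (Fin.last p) • z := by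
  ext i
  simp [appendCol, mulVec, dotProduct, Fin.sum_univ_castSucc, mul_comm]

theorem Matrix.appendCol_transpose_mulVec_castSucc [Fintype m] (X : Matrix m (Fin p) ℝ)
    (z v : m → ℝ) (j : Fin p) : ((X.appendCol z)ᵀ *ᵥ v) j.castSucc = (Xᵀ *ᵥ v) j := by
  simp [appendCol, mulVec, dotProduct]

theorem Matrix.transpose_mulVec_appendCol_ols [Fintype m] (X : Matrix m (Fin p) ℝ)
    (z y : m → ℝ) (hW : IsUnit ((X.appendCol z)ᵀ * X.appendCol z).det) (b : Fin (p + 1) → ℝ)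
    (hb : b = ((X.appendCol z)ᵀ * X.appendCol z)⁻¹ *ᵥ ((X.appendCol z)ᵀ *ᵥ y)) :
    Xᵀ *ᵥ (X *ᵥ (fun j => b j.castSucc) + b (Fin.last p) • z) = Xᵀ *ᵥ y := by
  ext j
  have h := congrFun (transpose_mulVec_mulVec_ols _ hW y) j.castSucc
  rwa [← hb, appendCol_mulVec, appendCol_transpose_mulVec_castSucc,
    appendCol_transpose_mulVec_castSucc] at h

end Augment

theorem relevance_by_omission_training_general
    {n₁ p : ℕ} (hn₁ : 0 < n₁)
    (X₁ : Matrix (Fin n₁) (Fin p) ℝ) (z₁ y₁ : Fin n₁ → ℝ)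
    -- the augmented matrix `W = [X₁ z₁]` (last column is `z₁`)
    (W : Matrix (Fin n₁) (Fin (p + 1)) ℝ)
    (hW : W = Matrix.of fun i j => Fin.lastCases (z₁ i) (fun j' => X₁ i j') j)
    -- the augmented Gram matrix `[X₁ z₁]ᵀ[X₁ z₁]` is invertible
    (hWunit : IsUnit (Wᵀ * W).det)
    -- hence `X₁ᵀX₁` is invertible
    (hXunit : IsUnit (X₁ᵀ * X₁).det)
    -- stacked joint OLS coefficients `b = ([X₁ z₁]ᵀ[X₁ z₁])⁻¹[X₁ z₁]ᵀy₁`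
    (b : Fin (p + 1) → ℝ) (hb : b = (Wᵀ * W)⁻¹ *ᵥ (Wᵀ *ᵥ y₁))
    (βx : Fin p → ℝ) (βz : ℝ)
    (hβx : βx = fun j => b j.castSucc) (hβz : βz = b (Fin.last p))
    -- reduced-model OLS coefficients `β̂₀ = (X₁ᵀX₁)⁻¹X₁ᵀy₁`
    (β0 : Fin p → ℝ) (hβ0 : β0 = (X₁ᵀ * X₁)⁻¹ *ᵥ (X₁ᵀ *ᵥ y₁))
    -- `α̂₁ = (X₁ᵀX₁)⁻¹X₁ᵀz₁`, `ẑ₁ = X₁α̂₁`, `k = (z₁ − ẑ₁)ᵀ(z₁ − ẑ₁)`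
    (α₁ : Fin p → ℝ) (hα₁ : α₁ = (X₁ᵀ * X₁)⁻¹ *ᵥ (X₁ᵀ *ᵥ z₁))
    (zhat₁ : Fin n₁ → ℝ) (hzhat₁ : zhat₁ = X₁ *ᵥ α₁)
    (k : ℝ) (hk : k = (z₁ - zhat₁) ⬝ᵥ (z₁ - zhat₁))
    -- `σ̂²_{z.x,n₁} = k/n₁`
    (σ2zx : ℝ) (hσ2zx : σ2zx = k / n₁)
    -- residual variance `σ̂²`
    (σ2 : ℝ)
    -- `F_z := β̂_z²·k/σ̂²`, the F-test statistic for `H₀ : β_z = 0`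
    (Fz : ℝ) (hFz : Fz = βz ^ 2 * k / σ2)
    -- `Rel_Om^Train(Z) := (1/n₁)·‖(X₁β̂_x + z₁β̂_z) − X₁β̂₀‖²`
    (Rel : ℝ)
    (hRel : Rel = (1 / n₁) *
      (((X₁ *ᵥ βx + βz • z₁) - X₁ *ᵥ β0) ⬝ᵥ ((X₁ *ᵥ βx + βz • z₁) - X₁ *ᵥ β0))) :
    Rel = βz ^ 2 * k / n₁ ∧ Rel = βz ^ 2 * σ2zx ∧
      (0 < σ2 → (n₁ / σ2) * Rel = Fz) := by
  have hnormal : X₁ᵀ *ᵥ (X₁ *ᵥ βx + βz • z₁) = X₁ᵀ *ᵥ y₁ := by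
    subst hW hβx hβz
    exact transpose_mulVec_appendCol_ols X₁ z₁ y₁ hWunit b hb
  have hβ0' : β0 = βx + βz • α₁ := by
    rw [hβ0, hα₁, ols_eq_add_smul_of_normal_eq X₁ hXunit hnormal]
  have hfit : (X₁ *ᵥ βx + βz • z₁) - X₁ *ᵥ β0 = βz • (z₁ - zhat₁) := by
    rw [hβ0', hzhat₁, mulVec_add, mulVec_smul, smul_sub]
    abel
  have hRel' : Rel = βz ^ 2 * k / n₁ := by
    rw [hRel, hfit, smul_dotProduct, dotProduct_smul, ← hk, smul_eq_mul, smul_eq_mul]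
    ring
  refine ⟨hRel', by rw [hRel', hσ2zx]; ring, fun hσ => ?_⟩
  have hn : (n₁ : ℝ) ≠ 0 := Nat.cast_ne_zero.mpr hn₁.ne'
  rw [hRel', hFz]
  field_simp

/-- **Relevance by omission in the training sample (Proposition: Rel_Om^Train).**
Under the stated OLS setup, the relevance by omission of `Z` evaluated in the training
sample, `Rel_Om^Train(Z) := (1/n₁)·‖(X₁β̂_x + z₁β̂_z) − X₁β̂₀‖²`, satisfies
`Rel_Om^Train(Z) = β̂_z²·k/n₁ = β̂_z²·σ̂²_{z.x,n₁}`, and consequently, if `σ̂² > 0`,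
`(n₁/σ̂²)·Rel_Om^Train(Z) = F_z`, where `F_z := β̂_z²·k/σ̂²`. -/
theorem relevance_by_omission_training
    {n₁ p : ℕ} (hn₁ : 0 < n₁) (hp : 0 < p) (hnp : p + 1 < n₁)
    (X₁ : Matrix (Fin n₁) (Fin p) ℝ) (z₁ y₁ : Fin n₁ → ℝ)
    -- the augmented matrix `W = [X₁ z₁]` (last column is `z₁`)
    (W : Matrix (Fin n₁) (Fin (p + 1)) ℝ)
    (hW : W = Matrix.of fun i j => Fin.lastCases (z₁ i) (fun j' => X₁ i j') j)
    -- the augmented Gram matrix `[X₁ z₁]ᵀ[X₁ z₁]` is invertible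
    (hWunit : IsUnit (Wᵀ * W).det)
    -- hence `X₁ᵀX₁` is invertible
    (hXunit : IsUnit (X₁ᵀ * X₁).det)
    -- stacked joint OLS coefficients `b = ([X₁ z₁]ᵀ[X₁ z₁])⁻¹[X₁ z₁]ᵀy₁`
    (b : Fin (p + 1) → ℝ) (hb : b = (Wᵀ * W)⁻¹ *ᵥ (Wᵀ *ᵥ y₁))
    (βx : Fin p → ℝ) (βz : ℝ)
    (hβx : βx = fun j => b j.castSucc) (hβz : βz = b (Fin.last p))
    -- reduced-model OLS coefficients `β̂₀ = (X₁ᵀX₁)⁻¹X₁ᵀy₁`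
    (β0 : Fin p → ℝ) (hβ0 : β0 = (X₁ᵀ * X₁)⁻¹ *ᵥ (X₁ᵀ *ᵥ y₁))
    -- `α̂₁ = (X₁ᵀX₁)⁻¹X₁ᵀz₁`, `ẑ₁ = X₁α̂₁`, `k = (z₁ − ẑ₁)ᵀ(z₁ − ẑ₁)`
    (α₁ : Fin p → ℝ) (hα₁ : α₁ = (X₁ᵀ * X₁)⁻¹ *ᵥ (X₁ᵀ *ᵥ z₁))
    (zhat₁ : Fin n₁ → ℝ) (hzhat₁ : zhat₁ = X₁ *ᵥ α₁)
    (k : ℝ) (hk : k = (z₁ - zhat₁) ⬝ᵥ (z₁ - zhat₁))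
    -- `σ̂²_{z.x,n₁} = k/n₁`
    (σ2zx : ℝ) (hσ2zx : σ2zx = k / n₁)
    -- residual variance `σ̂²`
    (σ2 : ℝ)
    (hσ2 : σ2 = (y₁ - X₁ *ᵥ βx - βz • z₁) ⬝ᵥ (y₁ - X₁ *ᵥ βx - βz • z₁) / (n₁ - p - 1))
    -- `F_z := β̂_z²·k/σ̂²`, the F-test statistic for `H₀ : β_z = 0`
    (Fz : ℝ) (hFz : Fz = βz ^ 2 * k / σ2)
    -- `Rel_Om^Train(Z) := (1/n₁)·‖(X₁β̂_x + z₁β̂_z) − X₁β̂₀‖²`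
    (Rel : ℝ)
    (hRel : Rel = (1 / n₁) *
      (((X₁ *ᵥ βx + βz • z₁) - X₁ *ᵥ β0) ⬝ᵥ ((X₁ *ᵥ βx + βz • z₁) - X₁ *ᵥ β0))) :
    Rel = βz ^ 2 * k / n₁ ∧ Rel = βz ^ 2 * σ2zx ∧
      (0 < σ2 → (n₁ / σ2) * Rel = Fz) :=
  relevance_by_omission_training_general hn₁ X₁ z₁ y₁ W hW hWunit hXunit b hb βx βz hβx hβz β0 hβ0
    α₁ hα₁ zhat₁ hzhat₁ k hk σ2zx hσ2zx σ2 Fz hFz Rel hRel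
end

section
/- Under the stated two-sample OLS setup, the relevance by omission of Z evaluated in the test sample, Rel_Om(Z) := (1/n₂)·‖(X₂β̂_x + z₂β̂_z) − X₂β̂₀‖², satisfies the exact identity Rel_Om(Z) = β̂_z²·σ̂²_{z.x,n₁,n₂}, where σ̂²_{z.x,n₁,n₂} := (1/n₂)‖z₂ − X₂α̂₁‖², and consequently, if σ̂² > 0 and k > 0, (n₁/σ̂²)·Rel_Om(Z) = F_z·σ̂²_{z.x,n₁,n₂}/σ̂²_{z.x,n₁}, where F_z := β̂_z²·k/σ̂² and σ̂²_{z.x,n₁} := k/n₁. -/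
open Matrix

/-- **Relevance by omission in the test sample (Proposition: Rel_Om).**
Under the stated two-sample OLS setup, the relevance by omission of `Z` in the test
sample, `Rel_Om(Z) := (1/n₂)·‖(X₂β̂_x + z₂β̂_z) − X₂β̂₀‖²`, satisfies
`Rel_Om(Z) = β̂_z²·σ̂²_{z.x,n₁,n₂}` with `σ̂²_{z.x,n₁,n₂} := (1/n₂)‖z₂ − X₂α̂₁‖²`, and
consequently, if `σ̂² > 0` and `k > 0`,
`(n₁/σ̂²)·Rel_Om(Z) = F_z·σ̂²_{z.x,n₁,n₂}/σ̂²_{z.x,n₁}`, where `F_z := β̂_z²·k/σ̂²` and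
`σ̂²_{z.x,n₁} := k/n₁`. -/
theorem relevance_by_omission_test
    {n₁ n₂ p : ℕ} (hn₁ : 0 < n₁) (hn₂ : 0 < n₂) (hp : 0 < p) (hnp : p + 1 < n₁)
    (X₁ : Matrix (Fin n₁) (Fin p) ℝ) (z₁ y₁ : Fin n₁ → ℝ)
    -- the augmented matrix `W = [X₁ z₁]` (last column is `z₁`)
    (W : Matrix (Fin n₁) (Fin (p + 1)) ℝ)
    (hW : W = Matrix.of fun i j => Fin.lastCases (z₁ i) (fun j' => X₁ i j') j)
    -- the augmented Gram matrix `[X₁ z₁]ᵀ[X₁ z₁]` is invertible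
    (hWunit : IsUnit (Wᵀ * W).det)
    -- hence `X₁ᵀX₁` is invertible
    (hXunit : IsUnit (X₁ᵀ * X₁).det)
    -- stacked joint OLS coefficients `b = ([X₁ z₁]ᵀ[X₁ z₁])⁻¹[X₁ z₁]ᵀy₁`
    (b : Fin (p + 1) → ℝ) (hb : b = (Wᵀ * W)⁻¹ *ᵥ (Wᵀ *ᵥ y₁))
    (βx : Fin p → ℝ) (βz : ℝ)
    (hβx : βx = fun j => b j.castSucc) (hβz : βz = b (Fin.last p))
    -- reduced-model OLS coefficients `β̂₀ = (X₁ᵀX₁)⁻¹X₁ᵀy₁`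
    (β0 : Fin p → ℝ) (hβ0 : β0 = (X₁ᵀ * X₁)⁻¹ *ᵥ (X₁ᵀ *ᵥ y₁))
    -- `α̂₁ = (X₁ᵀX₁)⁻¹X₁ᵀz₁`, `ẑ₁ = X₁α̂₁`, `k = (z₁ − ẑ₁)ᵀ(z₁ − ẑ₁)`
    (α₁ : Fin p → ℝ) (hα₁ : α₁ = (X₁ᵀ * X₁)⁻¹ *ᵥ (X₁ᵀ *ᵥ z₁))
    (zhat₁ : Fin n₁ → ℝ) (hzhat₁ : zhat₁ = X₁ *ᵥ α₁)
    (k : ℝ) (hk : k = (z₁ - zhat₁) ⬝ᵥ (z₁ - zhat₁))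
    -- `σ̂²_{z.x,n₁} = k/n₁`
    (σ2zx₁ : ℝ) (hσ2zx₁ : σ2zx₁ = k / n₁)
    -- residual variance `σ̂²`
    (σ2 : ℝ)
    (hσ2 : σ2 = (y₁ - X₁ *ᵥ βx - βz • z₁) ⬝ᵥ (y₁ - X₁ *ᵥ βx - βz • z₁) / (n₁ - p - 1))
    -- `F_z := β̂_z²·k/σ̂²`, the F-test statistic for `H₀ : β_z = 0`
    (Fz : ℝ) (hFz : Fz = βz ^ 2 * k / σ2)
    -- test sample
    (X₂ : Matrix (Fin n₂) (Fin p) ℝ) (z₂ : Fin n₂ → ℝ)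
    -- `σ̂²_{z.x,n₁,n₂} := (1/n₂)‖z₂ − X₂α̂₁‖²`
    (σ2zx₁₂ : ℝ)
    (hσ2zx₁₂ : σ2zx₁₂ = (1 / n₂) * ((z₂ - X₂ *ᵥ α₁) ⬝ᵥ (z₂ - X₂ *ᵥ α₁)))
    -- `Rel_Om(Z) := (1/n₂)·‖(X₂β̂_x + z₂β̂_z) − X₂β̂₀‖²`
    (Rel : ℝ)
    (hRel : Rel = (1 / n₂) *
      (((X₂ *ᵥ βx + βz • z₂) - X₂ *ᵥ β0) ⬝ᵥ ((X₂ *ᵥ βx + βz • z₂) - X₂ *ᵥ β0))) :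
    Rel = βz ^ 2 * σ2zx₁₂ ∧
      (0 < σ2 → 0 < k → (n₁ / σ2) * Rel = Fz * σ2zx₁₂ / σ2zx₁) := by

  -- `v := W *ᵥ b` equals `X₁ *ᵥ βx + βz • z₁`
  have hWb : W *ᵥ b = X₁ *ᵥ βx + βz • z₁ := by
    funext i
    simp only [Matrix.mulVec, dotProduct, hW, Matrix.of_apply,
      Fin.sum_univ_castSucc, Fin.lastCases_castSucc, Fin.lastCases_last,
      Pi.add_apply, Pi.smul_apply, smul_eq_mul, hβx, hβz]
    ring
  -- normal equations
  have hnorm : Wᵀ *ᵥ (W *ᵥ b) = Wᵀ *ᵥ y₁ := by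
    rw [hb, Matrix.mulVec_mulVec, Matrix.mulVec_mulVec,
      Matrix.mul_nonsing_inv _ hWunit, Matrix.one_mulVec]
  have hX1 : X₁ᵀ *ᵥ (X₁ *ᵥ βx + βz • z₁) = X₁ᵀ *ᵥ y₁ := by
    have hnorm' : Wᵀ *ᵥ (X₁ *ᵥ βx + βz • z₁) = Wᵀ *ᵥ y₁ := by
      rw [← hWb]; exact hnorm
    funext j
    have h := congrFun hnorm' j.castSucc
    simpa only [Matrix.mulVec, dotProduct, Matrix.transpose_apply, hW,
      Matrix.of_apply, Fin.lastCases_castSucc] using h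
  have hα : (X₁ᵀ * X₁) *ᵥ α₁ = X₁ᵀ *ᵥ z₁ := by
    rw [hα₁, Matrix.mulVec_mulVec, Matrix.mul_nonsing_inv _ hXunit,
      Matrix.one_mulVec]
  have hβ0' : β0 = βx + βz • α₁ := by
    have : X₁ᵀ *ᵥ y₁ = (X₁ᵀ * X₁) *ᵥ (βx + βz • α₁) := by
      rw [← hX1, Matrix.mulVec_add, Matrix.mulVec_add, Matrix.mulVec_smul,
        Matrix.mulVec_smul, hα, Matrix.mulVec_mulVec]
    rw [hβ0, this, Matrix.mulVec_mulVec,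
      Matrix.nonsing_inv_mul _ hXunit, Matrix.one_mulVec]
  -- prediction gap
  have hdiff : (X₂ *ᵥ βx + βz • z₂) - X₂ *ᵥ β0 = βz • (z₂ - X₂ *ᵥ α₁) := by
    rw [hβ0', Matrix.mulVec_add, Matrix.mulVec_smul]
    module
  have h1 : Rel = βz ^ 2 * σ2zx₁₂ := by
    rw [hRel, hdiff, hσ2zx₁₂, smul_dotProduct, dotProduct_smul, smul_eq_mul,
      smul_eq_mul]
    ring
  refine ⟨h1, fun hσ hk => ?_⟩
  have hn₁' : (n₁ : ℝ) ≠ 0 := Nat.cast_ne_zero.mpr hn₁.ne'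
  rw [h1, hFz, hσ2zx₁]
  field_simp
end

section
/- Under the stated OLS setup, the coefficient of z in the joint regression admits the Frisch–Waugh-type representation β̂_z = (z − ẑ)ᵀy / k, where ẑ = X(XᵀX)⁻¹Xᵀz and k = (z − ẑ)ᵀ(z − ẑ); that is, β̂_z is the slope in the simple regression of y on the part of z orthogonal to the column space of X. -/
/-!
Write `e = z - ẑ`. The normal equations of the two regressions say that `e` is orthogonal to
the columns of `X`, and that the joint residual `r = y - Xβ̂_x - β̂_z z` is orthogonal to the
columns of `X` and to `z`. Hence in `eᵀy = eᵀXβ̂_x + β̂_z eᵀz + eᵀr` the first and last terms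
vanish, while `eᵀz = eᵀe + eᵀẑ = k` because `ẑ` lies in the column space of `X`. Finally
`k ≠ 0`: otherwise `z = ẑ` would be a linear combination of the columns of `X`, and
`[X z]` would have a nontrivial kernel, contradicting the invertibility of its Gram matrix.
-/

open Matrix

namespace Matrix

section

variable {R m p : Type*} [CommRing R] [Fintype m] [Fintype p] [DecidableEq p]

noncomputable def olsCoeff (W : Matrix m p R) (y : m → R) : p → R :=
  (Wᵀ * W)⁻¹ *ᵥ (Wᵀ *ᵥ y)

theorem transpose_mulVec_sub_mulVec_olsCoeff {W : Matrix m p R} (hW : IsUnit (Wᵀ * W).det)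
    (y : m → R) : Wᵀ *ᵥ (y - W *ᵥ olsCoeff W y) = 0 := by
  rw [olsCoeff, mulVec_sub, mulVec_mulVec, mulVec_mulVec, mul_nonsing_inv _ hW, one_mulVec,
    sub_self]

theorem eq_zero_of_mulVec_eq_zero_of_isUnit_det_gram {W : Matrix m p R}
    (hW : IsUnit (Wᵀ * W).det) {v : p → R} (hv : W *ᵥ v = 0) : v = 0 := by
  calc v = (Wᵀ * W)⁻¹ *ᵥ (Wᵀ *ᵥ (W *ᵥ v)) := by
        rw [mulVec_mulVec, mulVec_mulVec, Matrix.mul_assoc, nonsing_inv_mul _ hW, one_mulVec]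
    _ = 0 := by rw [hv, mulVec_zero, mulVec_zero]

end

section

variable {R m p : Type*} [CommRing R] [Fintype m] [Fintype p]

theorem dotProduct_mulVec_eq_zero {X : Matrix m p R} {w : m → R} (hw : Xᵀ *ᵥ w = 0)
    (d : p → R) : w ⬝ᵥ X *ᵥ d = 0 := by
  rw [dotProduct_mulVec, ← mulVec_transpose, hw, zero_dotProduct]

theorem dotProduct_eq_mul_dotProduct_self_of_orthogonal {X : Matrix m p R} {z y r : m → R}
    {a c : p → R} {β : R} (hy : y = X *ᵥ a + β • z + r) (hXr : Xᵀ *ᵥ r = 0)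
    (hzr : z ⬝ᵥ r = 0) (hXe : Xᵀ *ᵥ (z - X *ᵥ c) = 0) :
    (z - X *ᵥ c) ⬝ᵥ y = β * ((z - X *ᵥ c) ⬝ᵥ (z - X *ᵥ c)) := by
  set e := z - X *ᵥ c
  have her : e ⬝ᵥ r = 0 := by
    rw [sub_dotProduct, hzr, dotProduct_comm, dotProduct_mulVec_eq_zero hXr, sub_zero]
  have hez : e ⬝ᵥ z = e ⬝ᵥ e := by
    rw [show e = z - X *ᵥ c from rfl, dotProduct_sub _ z, dotProduct_mulVec_eq_zero hXe,
      sub_zero]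
  rw [hy, dotProduct_add, dotProduct_add, dotProduct_mulVec_eq_zero hXe, her, dotProduct_smul, hez, smul_eq_mul,
    zero_add, add_zero]

end

section

variable {R m : Type*} [CommRing R] {p : ℕ}

def snocCol (X : Matrix m (Fin p) R) (z : m → R) : Matrix m (Fin (p + 1)) R :=
  of fun i j => Fin.lastCases (z i) (X i) j

variable (X : Matrix m (Fin p) R) (z : m → R)

theorem snocCol_mulVec (v : Fin (p + 1) → R) :
    snocCol X z *ᵥ v = X *ᵥ Fin.init v + v (Fin.last p) • z := by
  ext i
  simp only [snocCol, mulVec, dotProduct, Fin.sum_univ_castSucc, of_apply,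
    Fin.lastCases_castSucc, Fin.lastCases_last, Pi.add_apply, Pi.smul_apply, smul_eq_mul,
    Fin.init]
  ring

variable [Fintype m]

theorem transpose_snocCol_mulVec_castSucc (u : m → R) (j : Fin p) :
    ((snocCol X z)ᵀ *ᵥ u) j.castSucc = (Xᵀ *ᵥ u) j := by
  simp [snocCol, mulVec, dotProduct]

theorem transpose_snocCol_mulVec_last (u : m → R) :
    ((snocCol X z)ᵀ *ᵥ u) (Fin.last p) = z ⬝ᵥ u := by
  simp [snocCol, mulVec, dotProduct]

theorem transpose_mulVec_eq_zero_of_transpose_snocCol_mulVec_eq_zero {u : m → R}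
    (hu : (snocCol X z)ᵀ *ᵥ u = 0) : Xᵀ *ᵥ u = 0 := by
  ext j
  rw [← transpose_snocCol_mulVec_castSucc X z, hu, Pi.zero_apply, Pi.zero_apply]

theorem dotProduct_eq_zero_of_transpose_snocCol_mulVec_eq_zero {u : m → R}
    (hu : (snocCol X z)ᵀ *ᵥ u = 0) : z ⬝ᵥ u = 0 := by
  rw [← transpose_snocCol_mulVec_last X z, hu, Pi.zero_apply]

theorem ne_mulVec_of_isUnit_det_gram_snocCol [Nontrivial R]
    (h : IsUnit ((snocCol X z)ᵀ * snocCol X z).det) (c : Fin p → R) : z ≠ X *ᵥ c := by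
  intro hz
  have hv : snocCol X z *ᵥ Fin.snoc c (-1) = 0 := by
    rw [snocCol_mulVec, Fin.init_snoc, Fin.snoc_last, hz, neg_one_smul, add_neg_cancel]
  have := congrFun (eq_zero_of_mulVec_eq_zero_of_isUnit_det_gram h hv) (Fin.last p)
  rw [Fin.snoc_last, Pi.zero_apply] at this
  exact neg_ne_zero.mpr one_ne_zero this

end

end Matrix

theorem relevance_frisch_waugh_beta_z_general
    {n p : ℕ}
    (X : Matrix (Fin n) (Fin p) ℝ) (z y : Fin n → ℝ)
    -- the augmented matrix `W = [X z]` (last column is `z`)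
    (W : Matrix (Fin n) (Fin (p + 1)) ℝ)
    (hW : W = Matrix.of fun i j => Fin.lastCases (z i) (fun j' => X i j') j)
    -- the augmented Gram matrix `[X z]ᵀ[X z]` is invertible
    (hWunit : IsUnit (Wᵀ * W).det)
    -- hence `XᵀX` is invertible
    (hXunit : IsUnit (Xᵀ * X).det)
    -- stacked joint OLS coefficients `b = ([X z]ᵀ[X z])⁻¹[X z]ᵀy`
    (b : Fin (p + 1) → ℝ) (hb : b = (Wᵀ * W)⁻¹ *ᵥ (Wᵀ *ᵥ y))
    (βz : ℝ)
    (hβz : βz = b (Fin.last p))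
    -- `zhat = X(XᵀX)⁻¹Xᵀz` and `k = (z − zhat)ᵀ(z − zhat)`
    (zhat : Fin n → ℝ) (hzhat : zhat = X *ᵥ ((Xᵀ * X)⁻¹ *ᵥ (Xᵀ *ᵥ z)))
    (k : ℝ) (hk : k = (z - zhat) ⬝ᵥ (z - zhat)) :
    βz = (z - zhat) ⬝ᵥ y / k := by
  obtain rfl : W = snocCol X z := hW
  obtain rfl : zhat = X *ᵥ olsCoeff X z := hzhat
  subst hk hβz
  have hres : (snocCol X z)ᵀ *ᵥ (y - snocCol X z *ᵥ b) = 0 :=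
    hb ▸ transpose_mulVec_sub_mulVec_olsCoeff hWunit y
  have hy : y = X *ᵥ Fin.init b + b (Fin.last p) • z + (y - snocCol X z *ᵥ b) := by
    rw [← snocCol_mulVec, add_sub_cancel]
  have hk : (z - X *ᵥ olsCoeff X z) ⬝ᵥ (z - X *ᵥ olsCoeff X z) ≠ 0 := fun h0 =>
    ne_mulVec_of_isUnit_det_gram_snocCol X z hWunit (olsCoeff X z)
      (sub_eq_zero.mp (dotProduct_self_eq_zero.mp h0))
  rw [eq_div_iff hk, dotProduct_eq_mul_dotProduct_self_of_orthogonal hy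
    (transpose_mulVec_eq_zero_of_transpose_snocCol_mulVec_eq_zero X z hres)
    (dotProduct_eq_zero_of_transpose_snocCol_mulVec_eq_zero X z hres)
    (transpose_mulVec_sub_mulVec_olsCoeff hXunit z)]

/-- **Frisch–Waugh representation of the OLS coefficient of `z`.**
Under the stated OLS setup (joint OLS coefficients `(β̂_x, β̂_z)` obtained by stacking
them as `([X z]ᵀ[X z])⁻¹[X z]ᵀy`), the coefficient of `z` satisfies
`β̂_z = (z − zhat)ᵀy / k`, where `zhat = X(XᵀX)⁻¹Xᵀz` and `k = (z − zhat)ᵀ(z − zhat)`. -/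
theorem relevance_frisch_waugh_beta_z
    {n p : ℕ} (hn : 0 < n) (hp : 0 < p)
    (X : Matrix (Fin n) (Fin p) ℝ) (z y : Fin n → ℝ)
    -- the augmented matrix `W = [X z]` (last column is `z`)
    (W : Matrix (Fin n) (Fin (p + 1)) ℝ)
    (hW : W = Matrix.of fun i j => Fin.lastCases (z i) (fun j' => X i j') j)
    -- the augmented Gram matrix `[X z]ᵀ[X z]` is invertible
    (hWunit : IsUnit (Wᵀ * W).det)
    -- hence `XᵀX` is invertible
    (hXunit : IsUnit (Xᵀ * X).det)
    -- stacked joint OLS coefficients `b = ([X z]ᵀ[X z])⁻¹[X z]ᵀy`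
    (b : Fin (p + 1) → ℝ) (hb : b = (Wᵀ * W)⁻¹ *ᵥ (Wᵀ *ᵥ y))
    (βx : Fin p → ℝ) (βz : ℝ)
    (hβx : βx = fun j => b j.castSucc) (hβz : βz = b (Fin.last p))
    -- `zhat = X(XᵀX)⁻¹Xᵀz` and `k = (z − zhat)ᵀ(z − zhat)`
    (zhat : Fin n → ℝ) (hzhat : zhat = X *ᵥ ((Xᵀ * X)⁻¹ *ᵥ (Xᵀ *ᵥ z)))
    (k : ℝ) (hk : k = (z - zhat) ⬝ᵥ (z - zhat)) :
    βz = (z - zhat) ⬝ᵥ y / k :=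
  relevance_frisch_waugh_beta_z_general X z y W hW hWunit hXunit b hb βz hβz zhat hzhat k hk
end

section
/- Under the stated OLS setup, the coefficient vector of X in the joint regression satisfies β̂_x = β̂₀ − α̂·β̂_z, where β̂₀ = (XᵀX)⁻¹Xᵀy is the OLS coefficient vector of the reduced regression of y on X alone and α̂ = (XᵀX)⁻¹Xᵀz is the OLS coefficient vector of the regression of z on X. -/
/-!
Write `W = [X z]` and `b = (β̂_x, β̂_z)`. The normal equations `WᵀW b = Wᵀy`, read off in the
rows belonging to `X`, say `Xᵀ(X β̂_x + β̂_z z) = Xᵀy`, i.e. `(XᵀX) β̂_x = Xᵀy − β̂_z Xᵀz`;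
multiplying by `(XᵀX)⁻¹` gives `β̂_x = β̂₀ − β̂_z α̂`.
-/

open Matrix

namespace Matrix

variable {m n : Type*} {R : Type*} [CommRing R]

def appendCol_s11 {p : ℕ} (X : Matrix m (Fin p) R) (z : m → R) : Matrix m (Fin (p + 1)) R :=
  of fun i j => Fin.lastCases (z i) (fun j' => X i j') j

theorem appendCol_mulVec_s11 {p : ℕ} (X : Matrix m (Fin p) R) (z : m → R) (b : Fin (p + 1) → R) :
    appendCol_s11 X z *ᵥ b = X *ᵥ (fun j => b j.castSucc) + b (Fin.last p) • z := by
  funext i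
  simp only [appendCol_s11, mulVec, dotProduct, of_apply, Fin.sum_univ_castSucc,
    Fin.lastCases_castSucc, Fin.lastCases_last, Pi.add_apply, Pi.smul_apply, smul_eq_mul]
  ring

variable [Fintype m]

theorem transpose_appendCol_mulVec_castSucc {p : ℕ} (X : Matrix m (Fin p) R) (z v : m → R)
    (j : Fin p) : ((appendCol_s11 X z)ᵀ *ᵥ v) j.castSucc = (Xᵀ *ᵥ v) j := by
  simp only [appendCol_s11, mulVec, dotProduct, transpose_apply, of_apply, Fin.lastCases_castSucc]

theorem transpose_mulVec_appendCol_mulVec_castSucc {p : ℕ} {X : Matrix m (Fin p) R}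
    {z y : m → R} {b : Fin (p + 1) → R}
    (h : (appendCol_s11 X z)ᵀ *ᵥ (appendCol_s11 X z *ᵥ b) = (appendCol_s11 X z)ᵀ *ᵥ y) :
    Xᵀ *ᵥ (X *ᵥ (fun j => b j.castSucc) + b (Fin.last p) • z) = Xᵀ *ᵥ y := by
  funext j
  have hj := congrFun h j.castSucc
  rwa [transpose_appendCol_mulVec_castSucc, transpose_appendCol_mulVec_castSucc,
    appendCol_mulVec_s11] at hj

variable [Fintype n] [DecidableEq n]

theorem mulVec_nonsing_inv_mulVec {A : Matrix n n R} (hA : IsUnit A.det) (v : n → R) :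
    A *ᵥ (A⁻¹ *ᵥ v) = v := by
  rw [mulVec_mulVec, mul_nonsing_inv A hA, one_mulVec]

theorem nonsing_inv_mulVec_mulVec {A : Matrix n n R} (hA : IsUnit A.det) (v : n → R) :
    A⁻¹ *ᵥ (A *ᵥ v) = v := by
  rw [mulVec_mulVec, nonsing_inv_mul A hA, one_mulVec]

theorem transpose_mulVec_mulVec_leastSquares {A : Matrix m n R} (hA : IsUnit (Aᵀ * A).det)
    (y : m → R) : Aᵀ *ᵥ (A *ᵥ ((Aᵀ * A)⁻¹ *ᵥ (Aᵀ *ᵥ y))) = Aᵀ *ᵥ y := by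
  rw [mulVec_mulVec _ Aᵀ A, mulVec_nonsing_inv_mulVec hA]

theorem eq_leastSquares_sub_smul_leastSquares {A : Matrix m n R} (hA : IsUnit (Aᵀ * A).det)
    {u : n → R} {c : R} {z y : m → R} (h : Aᵀ *ᵥ (A *ᵥ u + c • z) = Aᵀ *ᵥ y) :
    u = (Aᵀ * A)⁻¹ *ᵥ (Aᵀ *ᵥ y) - c • (Aᵀ * A)⁻¹ *ᵥ (Aᵀ *ᵥ z) := by
  rw [← h, mulVec_add, mulVec_smul, mulVec_mulVec _ Aᵀ A, mulVec_add, mulVec_smul,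
    nonsing_inv_mulVec_mulVec hA, add_sub_cancel_right]

end Matrix

theorem ols_beta_x_update_general
    {n p : ℕ}
    (X : Matrix (Fin n) (Fin p) ℝ) (z y : Fin n → ℝ)
    -- the augmented matrix `W = [X z]` (last column is `z`)
    (W : Matrix (Fin n) (Fin (p + 1)) ℝ)
    (hW : W = Matrix.of fun i j => Fin.lastCases (z i) (fun j' => X i j') j)
    -- the augmented Gram matrix `[X z]ᵀ[X z]` is invertible
    (hWunit : IsUnit (Wᵀ * W).det)
    -- hence `XᵀX` is invertible
    (hXunit : IsUnit (Xᵀ * X).det)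
    -- stacked joint OLS coefficients `b = ([X z]ᵀ[X z])⁻¹[X z]ᵀy`
    (b : Fin (p + 1) → ℝ) (hb : b = (Wᵀ * W)⁻¹ *ᵥ (Wᵀ *ᵥ y))
    (βx : Fin p → ℝ) (βz : ℝ)
    (hβx : βx = fun j => b j.castSucc) (hβz : βz = b (Fin.last p))
    -- reduced-model OLS coefficients `β̂₀ = (XᵀX)⁻¹Xᵀy`
    (β0 : Fin p → ℝ) (hβ0 : β0 = (Xᵀ * X)⁻¹ *ᵥ (Xᵀ *ᵥ y))
    -- OLS coefficients of the regression of `z` on `X`: `α̂ = (XᵀX)⁻¹Xᵀz`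
    (α : Fin p → ℝ) (hα : α = (Xᵀ * X)⁻¹ *ᵥ (Xᵀ *ᵥ z)) :
    βx = β0 - βz • α := by
  subst hW hb hβx hβz hβ0 hα
  refine eq_leastSquares_sub_smul_leastSquares hXunit
    (transpose_mulVec_appendCol_mulVec_castSucc ?_)
  exact transpose_mulVec_mulVec_leastSquares hWunit y

/-- **Frisch–Waugh representation of the OLS coefficient of `z`.**
Under the stated OLS setup (joint OLS coefficients `(β̂_x, β̂_z)` obtained by stacking
them as `([X z]ᵀ[X z])⁻¹[X z]ᵀy`), the coefficient of `z` satisfies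
`β̂_z = (z − zhat)ᵀy / k`, where `zhat = X(XᵀX)⁻¹Xᵀz` and `k = (z − zhat)ᵀ(z − zhat)`. -/
theorem ols_beta_x_update
    {n p : ℕ} (hn : 0 < n) (hp : 0 < p)
    (X : Matrix (Fin n) (Fin p) ℝ) (z y : Fin n → ℝ)
    -- the augmented matrix `W = [X z]` (last column is `z`)
    (W : Matrix (Fin n) (Fin (p + 1)) ℝ)
    (hW : W = Matrix.of fun i j => Fin.lastCases (z i) (fun j' => X i j') j)
    -- the augmented Gram matrix `[X z]ᵀ[X z]` is invertible
    (hWunit : IsUnit (Wᵀ * W).det)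
    -- hence `XᵀX` is invertible
    (hXunit : IsUnit (Xᵀ * X).det)
    -- stacked joint OLS coefficients `b = ([X z]ᵀ[X z])⁻¹[X z]ᵀy`
    (b : Fin (p + 1) → ℝ) (hb : b = (Wᵀ * W)⁻¹ *ᵥ (Wᵀ *ᵥ y))
    (βx : Fin p → ℝ) (βz : ℝ)
    (hβx : βx = fun j => b j.castSucc) (hβz : βz = b (Fin.last p))
    -- `zhat = X(XᵀX)⁻¹Xᵀz` and `k = (z − zhat)ᵀ(z − zhat)`
    (zhat : Fin n → ℝ) (hzhat : zhat = X *ᵥ ((Xᵀ * X)⁻¹ *ᵥ (Xᵀ *ᵥ z)))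
    (k : ℝ) (hk : k = (z - zhat) ⬝ᵥ (z - zhat))
    -- reduced-model OLS coefficients `β̂₀ = (XᵀX)⁻¹Xᵀy`
    (β0 : Fin p → ℝ) (hβ0 : β0 = (Xᵀ * X)⁻¹ *ᵥ (Xᵀ *ᵥ y))
    -- OLS coefficients of the regression of `z` on `X`: `α̂ = (XᵀX)⁻¹Xᵀz`
    (α : Fin p → ℝ) (hα : α = (Xᵀ * X)⁻¹ *ᵥ (Xᵀ *ᵥ z)) :
    βx = β0 - βz • α :=
  ols_beta_x_update_general X z y W hW hWunit hXunit b hb βx βz hβx hβz β0 hβ0 α hα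
end
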